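/- arXiv:2310.13459 — 14 statements merged into one kernel-verified Lean document; each statement's English description precedes it below -/
import Mathlib

section
/- Let E be a real inner product space, let F : E → E be L-Lipschitz, and let γ ∈ (0, 1/L]. Then the map H := id − γF satisfies ⟨H z′ − H z, z′ − z⟩ ≥ (1/2)‖H z′ − H z‖² + (1/2)(1 − γ²L²)‖z′ − z‖² for all z, z′ ∈ E. In particular H is (1/2)-cocoercive. -/
open InnerProductSpace

/-- If `F : E → E` is `L`-Lipschitz and `γ ∈ (0, 1/L]`, then
`H := id − γF` satisfies
`⟪H z′ − H z, z′ − z⟫ ≥ (1/2)‖H z′ − H z‖² + (1/2)(1 − γ²L²)‖z′ − z‖²`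
for all `z, z′`; in particular `H` is `(1/2)`-cocoercive. -/
theorem stmt0 {E : Type*} [NormedAddCommGroup E] [InnerProductSpace ℝ E]
    (F : E → E) (L γ : ℝ) (hL : 0 < L)
    (hF : ∀ z z' : E, ‖F z - F z'‖ ≤ L * ‖z - z'‖)
    (hγ0 : 0 < γ) (hγL : γ ≤ 1 / L)
    (H : E → E) (hH : ∀ z, H z = z - γ • F z) :
    (∀ z z' : E, ⟪H z' - H z, z' - z⟫_ℝ ≥
      (1/2) * ‖H z' - H z‖^2 + (1/2) * (1 - γ^2 * L^2) * ‖z' - z‖^2) ∧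
    (∀ z z' : E, ⟪H z - H z', z - z'⟫_ℝ ≥ (1/2) * ‖H z - H z'‖^2) := by
  have hγL1 : γ * L ≤ 1 := by
    rw [le_div_iff₀ hL] at hγL; linarith
  have key : ∀ z z' : E, ⟪H z' - H z, z' - z⟫_ℝ ≥
      (1/2) * ‖H z' - H z‖^2 + (1/2) * (1 - γ^2 * L^2) * ‖z' - z‖^2 := by
    intro z z'
    set d := z' - z with hd
    set f := F z' - F z with hfdef
    have hHd : H z' - H z = d - γ • f := by
      rw [hH, hH, hd, hfdef, smul_sub]; abel
    have hf : ‖f‖ ≤ L * ‖d‖ := hF z' z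
    have hnorm : ‖d - γ • f‖^2 = ‖d‖^2 - 2 * (γ * ⟪d, f⟫_ℝ) + γ^2 * ‖f‖^2 := by
      rw [norm_sub_pow_two_real, real_inner_smul_right, norm_smul]
      simp [abs_of_pos hγ0, mul_pow]
    have hinner : ⟪d - γ • f, d⟫_ℝ = ‖d‖^2 - γ * ⟪d, f⟫_ℝ := by
      rw [inner_sub_left, real_inner_self_eq_norm_sq, real_inner_smul_left,
        real_inner_comm]
    rw [hHd, hinner, hnorm]
    nlinarith [norm_nonneg d, norm_nonneg f, sq_nonneg γ, mul_le_mul hf hf (norm_nonneg f) (by positivity : (0:ℝ) ≤ L * ‖d‖)]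
  refine ⟨key, fun z z' => ?_⟩
  have h := key z' z
  have h2 : γ^2 * L^2 ≤ 1 := by nlinarith [mul_nonneg hγ0.le hL.le]
  nlinarith [sq_nonneg ‖z - z'‖]
end

section
/- Let T : E → E be quasi-nonexpansive with fixed point z⋆, let λ ∈ (0,1), and let (e^k) be any sequence in E. Define the inexact Krasnosel'skiĭ–Mann iteration z^{k+1} = (1 − λ)z^k + λ(T z^k + e^k) from an arbitrary z^0 ∈ E. Then for every K ≥ 1: (1/K) Σ_{k=0}^{K−1} ‖T z^k − z^k‖² ≤ (‖z^0 − z⋆‖² + Σ_{k=0}^{K−1} ε_k) / (λ(1 − λ)K), where ε_k := 2λ‖e^k‖·‖z^k − z⋆‖ + λ²‖e^k‖². -/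
open InnerProductSpace

lemma km_norm_identity {E : Type*} [NormedAddCommGroup E] [InnerProductSpace ℝ E]
    (a b : E) (lam : ℝ) :
    ‖(1 - lam) • a + lam • b‖^2
      = (1 - lam) * ‖a‖^2 + lam * ‖b‖^2 - lam * (1 - lam) * ‖b - a‖^2 := by
  have h : ∀ x : E, ‖x‖^2 = inner ℝ x x := fun x => (real_inner_self_eq_norm_sq x).symm
  rw [h, h, h, h]
  simp only [inner_add_left, inner_add_right, inner_sub_left, inner_sub_right,
    real_inner_smul_left, real_inner_smul_right]
  rw [real_inner_comm b a]
  ring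

lemma km_norm_add_sq {E : Type*} [NormedAddCommGroup E] [InnerProductSpace ℝ E]
    (v w : E) : ‖v + w‖^2 = ‖v‖^2 + 2 * inner ℝ v w + ‖w‖^2 := by
  have := norm_add_sq_real v w
  linarith

theorem stmt2 {E : Type*} [NormedAddCommGroup E] [InnerProductSpace ℝ E]
    (T : E → E)
    (hT : ∀ z w : E, T w = w → ‖T z - w‖ ≤ ‖z - w‖)
    (zstar : E) (hfix : T zstar = zstar)
    (lam : ℝ) (hlam0 : 0 < lam) (hlam1 : lam < 1)
    (e z : ℕ → E)
    (hz : ∀ k, z (k + 1) = (1 - lam) • z k + lam • (T (z k) + e k)) :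
    ∀ K : ℕ, 1 ≤ K →
      (1 / (K : ℝ)) * ∑ k ∈ Finset.range K, ‖T (z k) - z k‖^2 ≤
        (‖z 0 - zstar‖^2 +
            ∑ k ∈ Finset.range K,
              (2 * lam * ‖e k‖ * ‖z k - zstar‖ + lam^2 * ‖e k‖^2)) /
          (lam * (1 - lam) * K) := by
  have hll : (0:ℝ) < lam * (1 - lam) := by nlinarith
  have key : ∀ k, lam * (1 - lam) * ‖T (z k) - z k‖^2 ≤
      (‖z k - zstar‖^2 - ‖z (k+1) - zstar‖^2) +
        (2 * lam * ‖e k‖ * ‖z k - zstar‖ + lam^2 * ‖e k‖^2) := by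
    intro k
    set a := z k - zstar with ha
    set b := T (z k) - zstar with hb
    set v := (1 - lam) • a + lam • b with hv
    have hzk : z (k+1) - zstar = v + lam • e k := by
      rw [hz k, hv, ha, hb]
      module
    have hba : b - a = T (z k) - z k := by rw [hb, ha]; abel
    have hid : ‖v‖^2 = (1 - lam) * ‖a‖^2 + lam * ‖b‖^2
        - lam * (1 - lam) * ‖T (z k) - z k‖^2 := by
      rw [hv, km_norm_identity, hba]
    have hble : ‖b‖ ≤ ‖a‖ := hT (z k) zstar hfix
    have hvle : ‖v‖ ≤ ‖a‖ := by
      calc ‖v‖ ≤ ‖(1 - lam) • a‖ + ‖lam • b‖ := norm_add_le _ _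
        _ = (1 - lam) * ‖a‖ + lam * ‖b‖ := by
            rw [norm_smul, norm_smul, Real.norm_eq_abs, Real.norm_eq_abs,
              abs_of_pos hlam0, abs_of_pos (by linarith : (0:ℝ) < 1 - lam)]
        _ ≤ ‖a‖ := by nlinarith
    have hexp : ‖z (k+1) - zstar‖^2
        = ‖v‖^2 + 2 * lam * inner ℝ v (e k) + lam^2 * ‖e k‖^2 := by
      rw [hzk, km_norm_add_sq, real_inner_smul_right, norm_smul, Real.norm_eq_abs,
        abs_of_pos hlam0, mul_pow]
      ring
    have hcs : (inner ℝ v (e k) : ℝ) ≤ ‖v‖ * ‖e k‖ := real_inner_le_norm v (e k)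
    have hnorm_e : (0:ℝ) ≤ ‖e k‖ := norm_nonneg _
    have hnorm_a : (0:ℝ) ≤ ‖a‖ := norm_nonneg _
    have h1 : ‖v‖ * ‖e k‖ ≤ ‖a‖ * ‖e k‖ := mul_le_mul_of_nonneg_right hvle hnorm_e
    have h2 : ‖b‖^2 ≤ ‖a‖^2 := by nlinarith [norm_nonneg b]
    nlinarith [hlam0.le]
  intro K hK
  have hK0 : (0:ℝ) < K := by exact_mod_cast Nat.lt_of_lt_of_le Nat.zero_lt_one hK
  have hsum : lam * (1 - lam) * ∑ k ∈ Finset.range K, ‖T (z k) - z k‖^2 ≤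
      ‖z 0 - zstar‖^2 +
        ∑ k ∈ Finset.range K, (2 * lam * ‖e k‖ * ‖z k - zstar‖ + lam^2 * ‖e k‖^2) := by
    rw [Finset.mul_sum]
    calc ∑ k ∈ Finset.range K, lam * (1 - lam) * ‖T (z k) - z k‖^2
        ≤ ∑ k ∈ Finset.range K, ((‖z k - zstar‖^2 - ‖z (k+1) - zstar‖^2) +
            (2 * lam * ‖e k‖ * ‖z k - zstar‖ + lam^2 * ‖e k‖^2)) :=
          Finset.sum_le_sum fun k _ => key k
      _ = (‖z 0 - zstar‖^2 - ‖z K - zstar‖^2) +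
            ∑ k ∈ Finset.range K, (2 * lam * ‖e k‖ * ‖z k - zstar‖ + lam^2 * ‖e k‖^2) := by
          rw [Finset.sum_add_distrib, Finset.sum_range_sub' (fun k => ‖z k - zstar‖^2)]
      _ ≤ _ := by nlinarith [sq_nonneg ‖z K - zstar‖]
  rw [one_div, inv_mul_eq_div, div_le_div_iff₀ hK0 (by positivity)]
  nlinarith [hsum]
end

section
/- Let S : E → Set E be ρ-comonotone with ρ > −γ/2 for some γ > 0, let 0 ∈ S(z⋆), and let λ ∈ (0,1). Suppose sequences (z^k), (z̄^k), (v^k), (e^k) in E satisfy the inexact relaxed proximal point recursion: z̄^k = z^k − v^k with v^k/γ ∈ S(z̄^k), and z^{k+1} = (1 − λ)z^k + λ(z̄^k + e^k). Then for every k, ‖v^{k+1}‖² ≤ ‖v^k‖² + 4‖e^k‖(‖z^{k+1} − z⋆‖ + ‖z^k − z⋆‖). (Here v^k = z^k − J_{γS}(z^k) is the resolvent residual, so the residual is monotonically decreasing up to the error term.) -/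
open InnerProductSpace

set_option maxHeartbeats 1000000

/-- monotonic decrease (up to an error term) of the resolvent
residual `v^k` along the inexact relaxed proximal point recursion
`z̄^k = z^k − v^k`, `v^k/γ ∈ S(z̄^k)`, `z^{k+1} = (1−λ)z^k + λ(z̄^k + e^k)`
for a `ρ`-comonotone operator `S` with `ρ > −γ/2`. -/
theorem stmt5 {E : Type*} [NormedAddCommGroup E] [InnerProductSpace ℝ E]
    (S : E → Set E) (ρ γ : ℝ) (hγ : 0 < γ) (hρ : ρ > -γ / 2)
    (hS : ∀ z z' v v' : E, v ∈ S z → v' ∈ S z' →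
      ⟪v - v', z - z'⟫_ℝ ≥ ρ * ‖v - v'‖^2)
    (zstar : E) (hzstar : (0 : E) ∈ S zstar)
    (lam : ℝ) (hlam0 : 0 < lam) (hlam1 : lam < 1)
    (z zbar v e : ℕ → E)
    (hbar : ∀ k, zbar k = z k - v k)
    (hv : ∀ k, (1 / γ) • v k ∈ S (zbar k))
    (hz : ∀ k, z (k + 1) = (1 - lam) • z k + lam • (zbar k + e k)) :
    ∀ k : ℕ, ‖v (k + 1)‖^2 ≤
      ‖v k‖^2 + 4 * ‖e k‖ * (‖z (k + 1) - zstar‖ + ‖z k - zstar‖) := by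
  have hγinv : ‖(1/γ : ℝ)‖ = 1/γ := by
    rw [Real.norm_eq_abs, abs_of_pos (by positivity)]
  -- residual bound vs distance to zstar
  have hbound : ∀ k, ‖v k‖ ≤ 2 * ‖z k - zstar‖ := by
    intro k
    have h := hS (zbar k) zstar ((1/γ) • v k) 0 (hv k) hzstar
    rw [sub_zero, real_inner_smul_left, norm_smul, hγinv] at h
    have hzz : z k - zstar = (zbar k - zstar) + v k := by rw [hbar k]; abel
    have hI : ⟪v k, z k - zstar⟫_ℝ = ⟪v k, zbar k - zstar⟫_ℝ + ‖v k‖^2 := by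
      rw [hzz, inner_add_right, real_inner_self_eq_norm_sq]
    have hcs := real_inner_le_norm (v k) (z k - zstar)
    rcases eq_or_lt_of_le (norm_nonneg (v k)) with h0 | h0
    · nlinarith [norm_nonneg (z k - zstar)]
    have hkey : ⟪v k, zbar k - zstar⟫_ℝ ≥ -(1/2) * ‖v k‖^2 := by
      have h2 : γ * ((1/γ) * ⟪v k, zbar k - zstar⟫_ℝ) ≥ γ * (ρ * (1/γ * ‖v k‖)^2) := by
        nlinarith
      have hg : γ ≠ 0 := ne_of_gt hγ
      rw [← mul_assoc, mul_one_div, div_self hg, one_mul] at h2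
      have h3 : γ * (ρ * (1/γ * ‖v k‖)^2) = (ρ/γ) * ‖v k‖^2 := by
        field_simp
      rw [h3] at h2
      have hrg : ρ/γ > -(1/2) := by
        rw [gt_iff_lt, lt_div_iff₀ hγ]; nlinarith
      nlinarith [sq_nonneg ‖v k‖, mul_nonneg (by linarith : (0:ℝ) ≤ ρ/γ + 1/2) (sq_nonneg ‖v k‖)]
    nlinarith
  intro k
  set a := v (k+1) with ha
  set b := v k with hb
  set u := a - b with hu
  have h := hS (zbar (k+1)) (zbar k) ((1/γ) • a) ((1/γ) • b) (hv (k+1)) (hv k)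
  rw [← smul_sub, real_inner_smul_left, norm_smul, hγinv] at h
  have hD : zbar (k+1) - zbar k = lam • e k - lam • b - u := by
    rw [hbar (k+1), hbar k, hz k, hbar k, hu, ha, hb]
    module
  rw [hD, inner_sub_right, inner_sub_right, real_inner_smul_right,
    real_inner_smul_right, real_inner_self_eq_norm_sq] at h
  -- h : (1/γ) * (lam * ⟪u, e k⟫ - lam * ⟪u, b⟫ - ‖u‖^2) ≥ ρ * (1/γ * ‖u‖)^2
  have hg : γ ≠ 0 := ne_of_gt hγ
  have h2 : lam * ⟪u, e k⟫_ℝ - lam * ⟪u, b⟫_ℝ - ‖u‖^2 ≥ (ρ/γ) * ‖u‖^2 := by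
    have h2 : γ * ((1/γ) * (lam * ⟪u, e k⟫_ℝ - lam * ⟪u, b⟫_ℝ - ‖u‖^2))
        ≥ γ * (ρ * (1/γ * ‖u‖)^2) := by nlinarith
    have h3 : γ * (ρ * (1/γ * ‖u‖)^2) = (ρ/γ) * ‖u‖^2 := by field_simp
    rw [← mul_assoc, mul_one_div, div_self hg, one_mul, h3] at h2
    exact h2
  have hQ : lam * ⟪u, b⟫_ℝ ≤ lam * ⟪u, e k⟫_ℝ - (1/2) * ‖u‖^2 := by
    have hrg : ρ/γ > -(1/2) := by
      rw [gt_iff_lt, lt_div_iff₀ hγ]; nlinarith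
    nlinarith [sq_nonneg ‖u‖, mul_nonneg (by linarith : (0:ℝ) ≤ ρ/γ + 1/2) (sq_nonneg ‖u‖)]
  have hQP : ⟪u, b⟫_ℝ - ⟪u, e k⟫_ℝ ≤ -(1/2) * ‖u‖^2 := by
    nlinarith [hQ, sq_nonneg ‖u‖, hlam0]
  have hA : ‖a‖^2 = ‖b‖^2 + 2 * ⟪u, b⟫_ℝ + ‖u‖^2 := by
    have hab : a = b + u := by rw [hu]; abel
    rw [hab, norm_add_sq_real, real_inner_comm b u]
  have hP : ⟪u, e k⟫_ℝ ≤ ‖u‖ * ‖e k‖ := real_inner_le_norm u (e k)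
  have hUab : ‖u‖ ≤ ‖a‖ + ‖b‖ := norm_sub_le a b
  have hba := hbound k
  have hba2 := hbound (k+1)
  have e1 : ‖u‖ * ‖e k‖ ≤ (‖a‖ + ‖b‖) * ‖e k‖ :=
    mul_le_mul_of_nonneg_right hUab (norm_nonneg _)
  have e2 : (‖a‖ + ‖b‖) * ‖e k‖ ≤ (2 * ‖z (k+1) - zstar‖ + 2 * ‖z k - zstar‖) * ‖e k‖ :=
    mul_le_mul_of_nonneg_right (by linarith) (norm_nonneg _)
  nlinarith [hA, hQP, hP, e1, e2]
end

section
/- Let S : E → Set E be ρ-comonotone with ρ > −γ/2 for some γ > 0, let 0 ∈ S(z⋆), and let λ ∈ (0,1). Suppose sequences (z^k), (z̄^k), (v^k), (e^k) in E satisfy the inexact relaxed proximal point recursion: z̄^k = z^k − v^k with v^k/γ ∈ S(z̄^k), and z^{k+1} = (1 − λ)z^k + λ(z̄^k + e^k). Then for every k ≥ 0, ‖z^{k+1} − z⋆‖ ≤ ‖z^0 − z⋆‖ + λ Σ_{j=0}^{k} ‖e^j‖. -/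
/-!
At a zero `z⋆`, comonotonicity of `S` with `ρ > -γ/2` turns the resolvent relation
`γ⁻¹ v ∈ S (z - v)` into `‖v‖² ≤ 2 ⟪v, z - z⋆⟫`, so the exact relaxed step `z ↦ z - λ v`
with `λ ≤ 1` does not move away from `z⋆`. The error `λ e` then adds at most `λ ‖e‖` per step,
and the bound follows by summing.
-/

open InnerProductSpace

section

variable {E : Type*} [NormedAddCommGroup E] [InnerProductSpace ℝ E]

def IsComonotone (S : E → Set E) (ρ : ℝ) : Prop :=
  ∀ z z' v v' : E, v ∈ S z → v' ∈ S z' → ⟪v - v', z - z'⟫_ℝ ≥ ρ * ‖v - v'‖ ^ 2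

theorem IsComonotone.mul_norm_sq_le_inner_of_resolvent {S : E → Set E} {ρ γ : ℝ}
    (hS : IsComonotone S ρ) (hγ : 0 < γ) {zstar z v : E} (hzstar : (0 : E) ∈ S zstar)
    (hv : γ⁻¹ • v ∈ S (z - v)) :
    (γ + ρ) * ‖v‖ ^ 2 ≤ γ * ⟪v, z - zstar⟫_ℝ := by
  have h := hS _ _ _ _ hv hzstar
  simp only [sub_zero] at h
  rw [real_inner_smul_left, norm_smul, Real.norm_of_nonneg (by positivity),
    sub_right_comm, inner_sub_right, real_inner_self_eq_norm_sq] at h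
  have h' := mul_le_mul_of_nonneg_left h (sq_nonneg γ)
  field_simp at h'
  linarith

theorem norm_sub_smul_le_norm {w v : E} {lam : ℝ} (hlam : 0 ≤ lam)
    (h : lam * ‖v‖ ^ 2 ≤ 2 * ⟪v, w⟫_ℝ) : ‖w - lam • v‖ ≤ ‖w‖ := by
  have hsq : ‖w - lam • v‖ ^ 2 ≤ ‖w‖ ^ 2 := by
    rw [norm_sub_sq_real, real_inner_smul_right, norm_smul, Real.norm_of_nonneg hlam,
      real_inner_comm]
    nlinarith
  exact (sq_le_sq₀ (norm_nonneg _) (norm_nonneg _)).mp hsq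

theorem le_add_sum_range_of_le_add {a b : ℕ → ℝ} (h : ∀ k, a (k + 1) ≤ a k + b k) (k : ℕ) :
    a k ≤ a 0 + ∑ j ∈ Finset.range k, b j := by
  induction k with
  | zero => simp
  | succ n ih => rw [Finset.sum_range_succ]; linarith [h n]

end

/-- boundedness of the iterates of the inexact relaxed proximal
point recursion: `‖z^{k+1} − z⋆‖ ≤ ‖z^0 − z⋆‖ + λ Σ_{j=0}^{k} ‖e^j‖`. -/
theorem stmt6 {E : Type*} [NormedAddCommGroup E] [InnerProductSpace ℝ E]
    (S : E → Set E) (ρ γ : ℝ) (hγ : 0 < γ) (hρ : ρ > -γ / 2)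
    (hS : ∀ z z' v v' : E, v ∈ S z → v' ∈ S z' →
      ⟪v - v', z - z'⟫_ℝ ≥ ρ * ‖v - v'‖^2)
    (zstar : E) (hzstar : (0 : E) ∈ S zstar)
    (lam : ℝ) (hlam0 : 0 < lam) (hlam1 : lam < 1)
    (z zbar v e : ℕ → E)
    (hbar : ∀ k, zbar k = z k - v k)
    (hv : ∀ k, (1 / γ) • v k ∈ S (zbar k))
    (hz : ∀ k, z (k + 1) = (1 - lam) • z k + lam • (zbar k + e k)) :
    ∀ k : ℕ, ‖z (k + 1) - zstar‖ ≤
      ‖z 0 - zstar‖ + lam * ∑ j ∈ Finset.range (k + 1), ‖e j‖ := by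
  have hexact : ∀ k, ‖z k - zstar - lam • v k‖ ≤ ‖z k - zstar‖ := fun k => by
    have hvk := hv k
    rw [hbar k, one_div] at hvk
    have hres := IsComonotone.mul_norm_sq_le_inner_of_resolvent hS hγ hzstar hvk
    have hrelax : lam * ‖v k‖ ^ 2 ≤ ‖v k‖ ^ 2 := mul_le_of_le_one_left (sq_nonneg _) hlam1.le
    have hcoef : γ * ‖v k‖ ^ 2 ≤ 2 * (γ + ρ) * ‖v k‖ ^ 2 :=
      mul_le_mul_of_nonneg_right (by linarith) (sq_nonneg _)
    refine norm_sub_smul_le_norm hlam0.le (le_of_mul_le_mul_left ?_ hγ)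
    linarith [mul_le_mul_of_nonneg_left hrelax hγ.le]
  have hstep : ∀ k, ‖z (k + 1) - zstar‖ ≤ ‖z k - zstar‖ + lam * ‖e k‖ := fun k => by
    have hsplit : z (k + 1) - zstar = (z k - zstar - lam • v k) + lam • e k := by
      rw [hz k, hbar k]
      module
    calc ‖z (k + 1) - zstar‖ ≤ ‖z k - zstar - lam • v k‖ + ‖lam • e k‖ :=
          hsplit ▸ norm_add_le _ _
      _ ≤ ‖z k - zstar‖ + lam * ‖e k‖ := by
          rw [norm_smul, Real.norm_of_nonneg hlam0.le]
          exact add_le_add_left (hexact k) _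
  intro k
  rw [Finset.mul_sum]
  exact le_add_sum_range_of_le_add (a := fun k => ‖z k - zstar‖) hstep (k + 1)
end

section
/- Let S : E → Set E be ρ-comonotone with ρ > −γ/2 for some γ > 0, let 0 ∈ S(z⋆), and let λ ∈ (0,1). Suppose sequences (z^k), (z̄^k), (v^k), (e^k) in E satisfy the inexact relaxed proximal point recursion: z̄^k = z^k − v^k with v^k/γ ∈ S(z̄^k), and z^{k+1} = (1 − λ)z^k + λ(z̄^k + e^k). Then for every K ≥ 1, the last-iterate residual satisfies ‖v^K‖² ≤ (‖z^0 − z⋆‖² + Σ_{k=0}^{K−1} ε_k) / (λ(1 − λ)K) + (1/K) Σ_{k=0}^{K−1} Σ_{j=k}^{K−1} δ_j, where ε_k := 2λ‖e^k‖·‖z^k − z⋆‖ + λ²‖e^k‖² and δ_k := 4‖e^k‖(‖z^{k+1} − z⋆‖ + ‖z^k − z⋆‖). -/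
open InnerProductSpace

/-- last-iterate rate for the inexact relaxed proximal point
recursion: for `K ≥ 1`,
`‖v^K‖² ≤ (‖z^0 − z⋆‖² + Σ_{k<K} ε_k)/(λ(1−λ)K) + (1/K) Σ_{k<K} Σ_{j=k}^{K−1} δ_j`
with `ε_k = 2λ‖e^k‖‖z^k − z⋆‖ + λ²‖e^k‖²` and
`δ_k = 4‖e^k‖(‖z^{k+1} − z⋆‖ + ‖z^k − z⋆‖)`. -/
theorem stmt7 {E : Type*} [NormedAddCommGroup E] [InnerProductSpace ℝ E]
    (S : E → Set E) (ρ γ : ℝ) (hγ : 0 < γ) (hρ : ρ > -γ / 2)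
    (hS : ∀ z z' v v' : E, v ∈ S z → v' ∈ S z' →
      ⟪v - v', z - z'⟫_ℝ ≥ ρ * ‖v - v'‖^2)
    (zstar : E) (hzstar : (0 : E) ∈ S zstar)
    (lam : ℝ) (hlam0 : 0 < lam) (hlam1 : lam < 1)
    (z zbar v e : ℕ → E)
    (hbar : ∀ k, zbar k = z k - v k)
    (hv : ∀ k, (1 / γ) • v k ∈ S (zbar k))
    (hz : ∀ k, z (k + 1) = (1 - lam) • z k + lam • (zbar k + e k)) :
    ∀ K : ℕ, 1 ≤ K →
      ‖v K‖^2 ≤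
        (‖z 0 - zstar‖^2 +
            ∑ k ∈ Finset.range K,
              (2 * lam * ‖e k‖ * ‖z k - zstar‖ + lam^2 * ‖e k‖^2)) /
          (lam * (1 - lam) * K) +
        (1 / (K : ℝ)) * ∑ k ∈ Finset.range K, ∑ j ∈ Finset.Ico k K,
          (4 * ‖e j‖ * (‖z (j + 1) - zstar‖ + ‖z j - zstar‖)) := by
  set r : ℝ := ρ / γ with hrdef
  have hrhalf : -(1/2 : ℝ) < r := by
    rw [hrdef, lt_div_iff₀ hγ]; linarith
  -- scaled comonotonicity
  have hmono : ∀ a b u u' : E, (1/γ) • u ∈ S a → (1/γ) • u' ∈ S b →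
      ⟪u - u', a - b⟫_ℝ ≥ r * ‖u - u'‖^2 := by
    intro a b u u' h1 h2
    have h := hS a b ((1/γ) • u) ((1/γ) • u') h1 h2
    rw [← smul_sub] at h
    rw [real_inner_smul_left, norm_smul] at h
    have habs : ‖(1/γ : ℝ)‖ = 1/γ := by
      rw [Real.norm_eq_abs, abs_of_pos (by positivity)]
    rw [habs] at h
    have hγ2 : (0:ℝ) < γ^2 := by positivity
    have hγne : γ ≠ 0 := ne_of_gt hγ
    field_simp at h
    rw [hrdef]
    rw [ge_iff_le, div_mul_eq_mul_div, div_le_iff₀ hγ]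
    nlinarith [h, hγ]
  -- key inequality: ⟪v k, z k − z⋆⟫ ≥ (1+r)‖v k‖²
  have h1 : ∀ k, ⟪v k, z k - zstar⟫_ℝ ≥ (1 + r) * ‖v k‖^2 := by
    intro k
    have h := hmono (zbar k) zstar (v k) 0 (hv k) (by simpa using hzstar)
    rw [sub_zero, hbar k, sub_right_comm, inner_sub_right,
      real_inner_self_eq_norm_sq] at h
    linarith [h]
  -- ‖v k‖ ≤ 2‖z k − z⋆‖
  have h2 : ∀ k, ‖v k‖ ≤ 2 * ‖z k - zstar‖ := by
    intro k
    have hin := h1 k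
    have hcs := real_inner_le_norm (v k) (z k - zstar)
    rcases eq_or_lt_of_le (norm_nonneg (v k)) with h0 | h0
    · rw [← h0]; positivity
    · nlinarith [norm_nonneg (z k - zstar)]
  -- descent inequality
  have h3 : ∀ k, ‖z (k+1) - zstar‖^2 ≤ ‖z k - zstar‖^2
      - lam * (1 - lam) * ‖v k‖^2
      + (2 * lam * ‖e k‖ * ‖z k - zstar‖ + lam^2 * ‖e k‖^2) := by
    intro k
    set u : E := z k - zstar with hu
    set w : E := u - lam • v k with hw
    have hw2 : ‖w‖^2 = ‖u‖^2 - 2 * (lam * ⟪v k, u⟫_ℝ) + lam^2 * ‖v k‖^2 := by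
      rw [hw, norm_sub_sq_real, real_inner_smul_right, norm_smul,
        Real.norm_eq_abs, abs_of_pos hlam0, mul_pow, real_inner_comm]
    have hwle : ‖w‖^2 ≤ ‖u‖^2 - lam * (1 - lam) * ‖v k‖^2 := by
      have hh := h1 k
      nlinarith [mul_le_mul_of_nonneg_left hh hlam0.le,
        mul_nonneg (mul_nonneg hlam0.le (by linarith : (0:ℝ) ≤ r + 1/2))
          (sq_nonneg ‖v k‖)]
    have hwnorm : ‖w‖ ≤ ‖u‖ := by
      nlinarith [norm_nonneg w, norm_nonneg u, sq_nonneg ‖v k‖,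
        mul_nonneg (mul_nonneg hlam0.le (by linarith : (0:ℝ) ≤ 1 - lam))
          (sq_nonneg ‖v k‖)]
    have hstep : z (k+1) - zstar = w + lam • e k := by
      rw [hz k, hbar k, hw, hu]; module
    rw [hstep, norm_add_sq_real, real_inner_smul_right, norm_smul,
      Real.norm_eq_abs, abs_of_pos hlam0, mul_pow]
    have hce : ⟪w, e k⟫_ℝ ≤ ‖u‖ * ‖e k‖ :=
      le_trans (real_inner_le_norm w (e k))
        (mul_le_mul_of_nonneg_right hwnorm (norm_nonneg _))
    nlinarith [mul_le_mul_of_nonneg_left hce hlam0.le]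
  -- near monotonicity of the residual
  have h4 : ∀ k, ‖v (k+1)‖^2 ≤ ‖v k‖^2
      + 4 * ‖e k‖ * (‖z (k+1) - zstar‖ + ‖z k - zstar‖) := by
    intro k
    set d : E := v (k+1) - v k with hd
    have hmon := hmono (zbar (k+1)) (zbar k) (v (k+1)) (v k) (hv _) (hv k)
    have hzb : zbar (k+1) - zbar k = (lam • e k - lam • v k) - d := by
      simp only [hd, hz, hbar]; module
    rw [hzb, inner_sub_right, inner_sub_right, real_inner_smul_right,
      real_inner_smul_right, real_inner_self_eq_norm_sq] at hmon
    -- hmon : λ⟪d, e k⟫ − λ⟪d, v k⟫ − ‖d‖² ≥ r‖d‖²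
    have hB : ⟪d, e k⟫_ℝ ≤ (2 * ‖z (k+1) - zstar‖ + 2 * ‖z k - zstar‖) * ‖e k‖ := by
      refine le_trans (real_inner_le_norm d (e k)) ?_
      refine mul_le_mul_of_nonneg_right ?_ (norm_nonneg _)
      refine le_trans (norm_sub_le _ _) ?_
      have := h2 (k+1); have := h2 k; linarith
    have hvk1 : v (k+1) = v k + d := by rw [hd]; abel
    rw [hvk1, norm_add_sq_real, real_inner_comm]
    -- goal: ‖v k‖² + 2⟪d, v k⟫ + ‖d‖² ≤ ‖v k‖² + 4‖e k‖(A+B)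
    have hdge : (0:ℝ) ≤ (2*(1+r) - lam) * ‖d‖^2 := by
      have : (0:ℝ) ≤ 2*(1+r) - lam := by linarith
      positivity
    nlinarith [mul_le_mul_of_nonneg_left hB hlam0.le, hdge]
  intro K hK
  set ε : ℕ → ℝ := fun k => 2 * lam * ‖e k‖ * ‖z k - zstar‖ + lam^2 * ‖e k‖^2 with hε
  set δ : ℕ → ℝ := fun k => 4 * ‖e k‖ * (‖z (k+1) - zstar‖ + ‖z k - zstar‖) with hδ
  -- telescoped descent
  have hsum1 : ∀ n : ℕ, (∑ k ∈ Finset.range n, lam * (1 - lam) * ‖v k‖^2)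
      ≤ ‖z 0 - zstar‖^2 - ‖z n - zstar‖^2 + ∑ k ∈ Finset.range n, ε k := by
    intro n
    induction n with
    | zero => simp
    | succ n ih =>
      rw [Finset.sum_range_succ, Finset.sum_range_succ]
      have := h3 n
      simp only [hε] at *
      linarith
  -- accumulated residual growth
  have hsum2 : ∀ k n : ℕ, ‖v (k+n)‖^2 ≤ ‖v k‖^2 + ∑ j ∈ Finset.Ico k (k+n), δ j := by
    intro k n
    induction n with
    | zero => simp
    | succ n ih =>
      have hle : k ≤ k + n := Nat.le_add_right k n
      have heq : k + (n+1) = (k+n) + 1 := rfl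
      rw [heq, Finset.sum_Ico_succ_top hle]
      have := h4 (k+n)
      simp only [hδ] at *
      linarith
  have hsum2' : ∀ k, k ≤ K → ‖v K‖^2 ≤ ‖v k‖^2 + ∑ j ∈ Finset.Ico k K, δ j := by
    intro k hk
    have := hsum2 k (K - k)
    rwa [Nat.add_sub_cancel' hk] at this
  -- averaging
  have hKpos : (0:ℝ) < (K:ℝ) := by exact_mod_cast Nat.lt_of_lt_of_le Nat.zero_lt_one hK
  have hKsum : (K:ℝ) * ‖v K‖^2 ≤ (∑ k ∈ Finset.range K, ‖v k‖^2)
      + ∑ k ∈ Finset.range K, ∑ j ∈ Finset.Ico k K, δ j := by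
    have hle : ∀ k ∈ Finset.range K, ‖v K‖^2 ≤ ‖v k‖^2 + ∑ j ∈ Finset.Ico k K, δ j := by
      intro k hk
      exact hsum2' k (le_of_lt (Finset.mem_range.mp hk))
    calc (K:ℝ) * ‖v K‖^2 = ∑ _k ∈ Finset.range K, ‖v K‖^2 := by
          rw [Finset.sum_const, Finset.card_range, nsmul_eq_mul]
      _ ≤ ∑ k ∈ Finset.range K, (‖v k‖^2 + ∑ j ∈ Finset.Ico k K, δ j) :=
          Finset.sum_le_sum hle
      _ = _ := Finset.sum_add_distrib
  set c : ℝ := lam * (1 - lam) with hc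
  have hcpos : (0:ℝ) < c := by rw [hc]; nlinarith
  set B : ℝ := ‖z 0 - zstar‖^2 + ∑ k ∈ Finset.range K, ε k with hB
  set D : ℝ := ∑ k ∈ Finset.range K, ∑ j ∈ Finset.Ico k K, δ j with hD
  have hcv : c * (∑ k ∈ Finset.range K, ‖v k‖^2) ≤ B := by
    have := hsum1 K
    rw [← Finset.mul_sum] at this
    have hz2 : (0:ℝ) ≤ ‖z K - zstar‖^2 := sq_nonneg _
    rw [hB]; linarith [hz2, this]
  have hkey : c * (K:ℝ) * ‖v K‖^2 ≤ B + c * D := by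
    nlinarith [mul_le_mul_of_nonneg_left hKsum hcpos.le]
  have hfin : ‖v K‖^2 ≤ B / (c * K) + (1/(K:ℝ)) * D := by
    have hcK : (0:ℝ) < c * K := by positivity
    have hc0 : c ≠ 0 := ne_of_gt hcpos
    have hK0 : (K:ℝ) ≠ 0 := ne_of_gt hKpos
    calc ‖v K‖^2 = (c * (K:ℝ) * ‖v K‖^2) / (c * K) := by field_simp
      _ ≤ (B + c * D) / (c * K) := by gcongr
      _ = B / (c * K) + (1/(K:ℝ)) * D := by field_simp
  simpa [hB, hD, hε, hδ, hc] using hfin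
end

section
/- Let E be a real Hilbert space, let F : E → E be L-Lipschitz and ρ-comonotone, let γ ∈ (0, 1/L) with ρ > −γ/2, and let λ ∈ (0,1), τ ≥ 1. For each z ∈ E let J(z) denote the unique point with J(z) + γ F(J(z)) = z (it exists since w ↦ z − γ F w is a (γL)-contraction). Consider the RAPP iteration: w_k^0 = z^k, w_k^{t+1} = z^k − γ F(w_k^t) for t = 0, …, τ−1, and z^{k+1} = (1 − λ)z^k + λ w_k^τ. Suppose F z⋆ = 0 and D := sup_{k} ‖z^k − z⋆‖ < ∞. Then for every K ≥ 1, the average residual satisfies (1/K) Σ_{k=0}^{K−1} ‖J(z^k) − z^k‖² ≤ ‖z^0 − z⋆‖² / (λ(1 − λ)K) + 4(γL)^τ D² / (1 − λ) + 4λ(γL)^{2τ} D² / (1 − λ). In particular, choosing τ with (γL)^τ ≤ 1/K makes the right-hand side O(1/K). -/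
open InnerProductSpace

/-- average-iterate rate for RAPP.  `F` is `L`-Lipschitz and
`ρ`-comonotone, `γ ∈ (0, 1/L)` with `ρ > −γ/2`, `λ ∈ (0,1)`, `τ ≥ 1`; `J z` is
the unique point with `J z + γ F (J z) = z`.  With the RAPP iteration
`w_k^0 = z^k`, `w_k^{t+1} = z^k − γ F(w_k^t)`, `z^{k+1} = (1−λ)z^k + λ w_k^τ`,
if `F z⋆ = 0` and `‖z^k − z⋆‖ ≤ D` for all `k`, then for every `K ≥ 1`:
`(1/K) Σ_{k<K} ‖J(z^k) − z^k‖² ≤ ‖z^0 − z⋆‖²/(λ(1−λ)K) + 4(γL)^τ D²/(1−λ)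
  + 4λ(γL)^{2τ} D²/(1−λ)`. -/
theorem stmt8 {E : Type*} [NormedAddCommGroup E] [InnerProductSpace ℝ E]
    [CompleteSpace E]
    (F : E → E) (L ρ γ lam : ℝ) (τ : ℕ) (hL : 0 < L)
    (hF : ∀ z z' : E, ‖F z - F z'‖ ≤ L * ‖z - z'‖)
    (hρ : ∀ z z' : E, ⟪F z - F z', z - z'⟫_ℝ ≥ ρ * ‖F z - F z'‖^2)
    (hγ0 : 0 < γ) (hγL : γ < 1 / L) (hργ : ρ > -γ / 2)
    (hlam0 : 0 < lam) (hlam1 : lam < 1) (hτ : 1 ≤ τ)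
    (J : E → E) (hJ : ∀ z, J z + γ • F (J z) = z)
    (z : ℕ → E) (w : ℕ → ℕ → E)
    (hw0 : ∀ k, w k 0 = z k)
    (hw : ∀ k, ∀ t < τ, w k (t + 1) = z k - γ • F (w k t))
    (hz : ∀ k, z (k + 1) = (1 - lam) • z k + lam • w k τ)
    (zstar : E) (hzstar : F zstar = 0)
    (D : ℝ) (hD : ∀ k, ‖z k - zstar‖ ≤ D) :
    ∀ K : ℕ, 1 ≤ K →
      (1 / (K : ℝ)) * ∑ k ∈ Finset.range K, ‖J (z k) - z k‖^2 ≤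
        ‖z 0 - zstar‖^2 / (lam * (1 - lam) * K) +
        4 * (γ * L)^τ * D^2 / (1 - lam) +
        4 * lam * (γ * L)^(2 * τ) * D^2 / (1 - lam) := by
  intro K hK
  have hlam1' : 0 < 1 - lam := by linarith
  have hκ0 : 0 < γ * L := mul_pos hγ0 hL
  have hD0 : 0 ≤ D := le_trans (norm_nonneg _) (hD 0)
  have hκτ : (0:ℝ) ≤ (γ*L)^τ := by positivity
  have hg : ∀ x : E, γ • F (J x) = x - J x := by
    intro x; rw [eq_sub_iff_add_eq, add_comm]; exact hJ x
  -- Lemma A : J is closer to zstar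
  have hA : ∀ x : E, ‖J x - zstar‖ ≤ ‖x - zstar‖ := by
    intro x
    have hxd : x - zstar = (J x - zstar) + γ • F (J x) := by rw [hg x]; abel
    have hin : ⟪F (J x), J x - zstar⟫_ℝ ≥ ρ * ‖F (J x)‖^2 := by
      have := hρ (J x) zstar
      rwa [hzstar, sub_zero] at this
    have hsq : ‖x - zstar‖^2
        = ‖J x - zstar‖^2 + 2*γ*⟪F (J x), J x - zstar⟫_ℝ + γ^2*‖F (J x)‖^2 := by
      rw [hxd, norm_add_sq_real, real_inner_smul_right, norm_smul,
        Real.norm_eq_abs, abs_of_pos hγ0, real_inner_comm]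
      ring
    have hn : (0:ℝ) ≤ ‖F (J x)‖^2 := sq_nonneg _
    have h2 : 0 ≤ γ*((γ + 2*ρ)*‖F (J x)‖^2) :=
      mul_nonneg hγ0.le (mul_nonneg (by linarith) hn)
    have h1 : 0 ≤ 2*γ*(⟪F (J x), J x - zstar⟫_ℝ - ρ*‖F (J x)‖^2) :=
      mul_nonneg (by linarith) (by linarith)
    have hle : ‖J x - zstar‖^2 ≤ ‖x - zstar‖^2 := by nlinarith
    nlinarith [norm_nonneg (J x - zstar), norm_nonneg (x - zstar)]
  -- Lemma B : contraction of the inner loop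
  have hB : ∀ k, ∀ t, t ≤ τ → ‖w k t - J (z k)‖ ≤ (γ*L)^t * ‖z k - J (z k)‖ := by
    intro k t
    induction t with
    | zero => intro _; simp [hw0]
    | succ t ih =>
      intro ht
      have ht' : t < τ := ht
      have h1 : w k (t+1) - J (z k) = γ • (F (J (z k)) - F (w k t)) := by
        rw [hw k t ht', smul_sub, hg (z k)]
        abel
      calc ‖w k (t+1) - J (z k)‖ = γ * ‖F (J (z k)) - F (w k t)‖ := by
            rw [h1, norm_smul, Real.norm_eq_abs, abs_of_pos hγ0]
        _ ≤ γ * (L * ‖J (z k) - w k t‖) :=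
            mul_le_mul_of_nonneg_left (hF _ _) hγ0.le
        _ = (γ*L) * ‖w k t - J (z k)‖ := by rw [norm_sub_rev]; ring
        _ ≤ (γ*L) * ((γ*L)^t * ‖z k - J (z k)‖) :=
            mul_le_mul_of_nonneg_left (ih ht'.le) hκ0.le
        _ = (γ*L)^(t+1) * ‖z k - J (z k)‖ := by ring
  -- Lemma C : residual bounded by 2D
  have hC : ∀ k, ‖z k - J (z k)‖ ≤ 2*D := by
    intro k
    have h1 : z k - J (z k) = (z k - zstar) + (zstar - J (z k)) := by abel
    calc ‖z k - J (z k)‖ ≤ ‖z k - zstar‖ + ‖zstar - J (z k)‖ := by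
          rw [h1]; exact norm_add_le _ _
      _ ≤ D + D := add_le_add (hD k)
          (by rw [norm_sub_rev]; exact (hA (z k)).trans (hD k))
      _ = 2*D := by ring
  set C : ℝ := 4*lam*(γ*L)^τ*D^2 + 4*lam^2*(γ*L)^(2*τ)*D^2 with hCdef
  -- per-step inequality
  have hstep : ∀ k, ‖z (k+1) - zstar‖^2
      ≤ ‖z k - zstar‖^2 - lam*(1-lam)*‖J (z k) - z k‖^2 + C := by
    intro k
    have hin : ⟪F (J (z k)), J (z k) - zstar⟫_ℝ ≥ ρ * ‖F (J (z k))‖^2 := by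
      have := hρ (J (z k)) zstar
      rwa [hzstar, sub_zero] at this
    have hn : (0:ℝ) ≤ ‖F (J (z k))‖^2 := sq_nonneg _
    have h1 : z k - zstar = (J (z k) - zstar) + γ • F (J (z k)) := by
      rw [hg (z k)]; abel
    have h2 : J (z k) - z k = -(γ • F (J (z k))) := by
      rw [hg (z k)]; abel
    have hnr : ‖J (z k) - z k‖^2 = γ^2*‖F (J (z k))‖^2 := by
      rw [h2, norm_neg, norm_smul, Real.norm_eq_abs, abs_of_pos hγ0, mul_pow]
    have hip : ⟪z k - zstar, J (z k) - z k⟫_ℝ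
        = -γ*⟪F (J (z k)), J (z k) - zstar⟫_ℝ - γ^2*‖F (J (z k))‖^2 := by
      rw [h1, h2, inner_neg_right, inner_add_left, real_inner_smul_right,
        real_inner_smul_left, real_inner_smul_right, real_inner_self_eq_norm_sq,
        real_inner_comm]
      ring
    have hzb : ‖(z k - zstar) + lam • (J (z k) - z k)‖^2
        ≤ ‖z k - zstar‖^2 - lam*(1-lam)*‖J (z k) - z k‖^2 := by
      have hexp : ‖(z k - zstar) + lam • (J (z k) - z k)‖^2
          = ‖z k - zstar‖^2 + 2*lam*⟪z k - zstar, J (z k) - z k⟫_ℝ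
            + lam^2*‖J (z k) - z k‖^2 := by
        rw [norm_add_sq_real, real_inner_smul_right, norm_smul,
          Real.norm_eq_abs, abs_of_pos hlam0]
        ring
      rw [hexp, hip, hnr]
      nlinarith [mul_nonneg (mul_nonneg hlam0.le hγ0.le)
          (sub_nonneg.2 hin),
        mul_nonneg (mul_nonneg hlam0.le hγ0.le)
          (mul_nonneg (by linarith : (0:ℝ) ≤ γ + 2*ρ) hn)]
    have hzbD : ‖(z k - zstar) + lam • (J (z k) - z k)‖ ≤ D := by
      have h3 : (z k - zstar) + lam • (J (z k) - z k)
          = (1-lam) • (z k - zstar) + lam • (J (z k) - zstar) := by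
        module
      rw [h3]
      calc ‖(1-lam) • (z k - zstar) + lam • (J (z k) - zstar)‖
          ≤ ‖(1-lam) • (z k - zstar)‖ + ‖lam • (J (z k) - zstar)‖ := norm_add_le _ _
        _ ≤ (1-lam)*D + lam*D := by
            rw [norm_smul, norm_smul, Real.norm_eq_abs, Real.norm_eq_abs,
              abs_of_pos hlam1', abs_of_pos hlam0]
            exact add_le_add (mul_le_mul_of_nonneg_left (hD k) hlam1'.le)
              (mul_le_mul_of_nonneg_left ((hA (z k)).trans (hD k)) hlam0.le)
        _ = D := by ring
    have hdb : ‖w k τ - J (z k)‖ ≤ (γ*L)^τ * (2*D) :=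
      (hB k τ le_rfl).trans (mul_le_mul_of_nonneg_left (hC k) hκτ)
    have hdec : z (k+1) - zstar
        = ((z k - zstar) + lam • (J (z k) - z k)) + lam • (w k τ - J (z k)) := by
      rw [hz k]; module
    have hexp2 : ‖z (k+1) - zstar‖^2
        = ‖(z k - zstar) + lam • (J (z k) - z k)‖^2
          + 2*lam*⟪(z k - zstar) + lam • (J (z k) - z k), w k τ - J (z k)⟫_ℝ
          + lam^2*‖w k τ - J (z k)‖^2 := by
      rw [hdec, norm_add_sq_real, real_inner_smul_right, norm_smul,
        Real.norm_eq_abs, abs_of_pos hlam0]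
      ring
    have hCS : ⟪(z k - zstar) + lam • (J (z k) - z k), w k τ - J (z k)⟫_ℝ
        ≤ D * ((γ*L)^τ * (2*D)) :=
      le_trans (real_inner_le_norm _ _)
        (mul_le_mul hzbD hdb (norm_nonneg _) hD0)
    have hd2 : ‖w k τ - J (z k)‖^2 ≤ ((γ*L)^τ * (2*D))^2 :=
      pow_le_pow_left₀ (norm_nonneg _) hdb 2
    have hCeq : C = 2*lam*(D * ((γ*L)^τ * (2*D))) + lam^2*((γ*L)^τ * (2*D))^2 := by
      rw [hCdef, two_mul, pow_add]; ring
    have e1 : 2*lam*⟪(z k - zstar) + lam • (J (z k) - z k), w k τ - J (z k)⟫_ℝ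
        ≤ 2*lam*(D * ((γ*L)^τ * (2*D))) :=
      mul_le_mul_of_nonneg_left hCS (by positivity)
    have e2 : lam^2*‖w k τ - J (z k)‖^2 ≤ lam^2*((γ*L)^τ * (2*D))^2 :=
      mul_le_mul_of_nonneg_left hd2 (by positivity)
    linarith [hexp2.le, hexp2.ge]
  -- telescoping
  have hsum : ∀ n : ℕ, lam*(1-lam) * ∑ k ∈ Finset.range n, ‖J (z k) - z k‖^2
      ≤ ‖z 0 - zstar‖^2 - ‖z n - zstar‖^2 + n*C := by
    intro n
    induction n with
    | zero => simp
    | succ n ih =>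
      rw [Finset.sum_range_succ, mul_add]
      have := hstep n
      push_cast
      linarith
  have hK0 : (0:ℝ) < K := by
    have : 0 < K := hK
    exact_mod_cast this
  have hden : (0:ℝ) < lam*(1-lam) := mul_pos hlam0 hlam1'
  have hkey : ∑ k ∈ Finset.range K, ‖J (z k) - z k‖^2
      ≤ (‖z 0 - zstar‖^2 + K*C)/(lam*(1-lam)) := by
    rw [le_div_iff₀ hden, mul_comm]
    linarith [hsum K, sq_nonneg ‖z K - zstar‖]
  calc (1/(K:ℝ)) * ∑ k ∈ Finset.range K, ‖J (z k) - z k‖^2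
      ≤ (1/(K:ℝ)) * ((‖z 0 - zstar‖^2 + K*C)/(lam*(1-lam))) :=
        mul_le_mul_of_nonneg_left hkey (by positivity)
    _ = ‖z 0 - zstar‖^2 / (lam * (1 - lam) * K)
        + 4 * (γ * L)^τ * D^2 / (1 - lam)
        + 4 * lam * (γ * L)^(2 * τ) * D^2 / (1 - lam) := by
        rw [hCdef]
        field_simp
        ring
end

section
/- Let E be a real Hilbert space, let F : E → E be L-Lipschitz and ρ-comonotone, let γ ∈ (0, 1/L) with ρ > −γ/2, and let λ ∈ (0,1), τ ≥ 1. For each z ∈ E let J(z) denote the unique point with J(z) + γ F(J(z)) = z. Consider the RAPP iteration: w_k^0 = z^k, w_k^{t+1} = z^k − γ F(w_k^t) for t = 0, …, τ−1, and z^{k+1} = (1 − λ)z^k + λ w_k^τ. Suppose F z⋆ = 0 and D := sup_{k} ‖z^k − z⋆‖ < ∞. Then for every K ≥ 1, the last iterate satisfies ‖J(z^K) − z^K‖² ≤ ‖z^0 − z⋆‖² / (λ(1 − λ)K) + 4(γL)^τ D² / (1 − λ) + 4λ(γL)^{2τ} D² / (1 − λ) + 16 K (γL)^τ D². In particular, choosing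 τ with (γL)^τ ≤ 1/K² makes the right-hand side O(1/K). -/
open InnerProductSpace

set_option maxHeartbeats 1000000 in
/-- last-iterate rate for RAPP.  Under the same setup as the
average-iterate result, for every `K ≥ 1`:
`‖J(z^K) − z^K‖² ≤ ‖z^0 − z⋆‖²/(λ(1−λ)K) + 4(γL)^τ D²/(1−λ)
  + 4λ(γL)^{2τ} D²/(1−λ) + 16 K (γL)^τ D²`. -/
theorem stmt9 {E : Type*} [NormedAddCommGroup E] [InnerProductSpace ℝ E]
    [CompleteSpace E]
    (F : E → E) (L ρ γ lam : ℝ) (τ : ℕ) (hL : 0 < L)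
    (hF : ∀ z z' : E, ‖F z - F z'‖ ≤ L * ‖z - z'‖)
    (hρ : ∀ z z' : E, ⟪F z - F z', z - z'⟫_ℝ ≥ ρ * ‖F z - F z'‖^2)
    (hγ0 : 0 < γ) (hγL : γ < 1 / L) (hργ : ρ > -γ / 2)
    (hlam0 : 0 < lam) (hlam1 : lam < 1) (hτ : 1 ≤ τ)
    (J : E → E) (hJ : ∀ z, J z + γ • F (J z) = z)
    (z : ℕ → E) (w : ℕ → ℕ → E)
    (hw0 : ∀ k, w k 0 = z k)
    (hw : ∀ k, ∀ t < τ, w k (t + 1) = z k - γ • F (w k t))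
    (hz : ∀ k, z (k + 1) = (1 - lam) • z k + lam • w k τ)
    (zstar : E) (hzstar : F zstar = 0)
    (D : ℝ) (hD : ∀ k, ‖z k - zstar‖ ≤ D) :
    ∀ K : ℕ, 1 ≤ K →
      ‖J (z K) - z K‖^2 ≤
        ‖z 0 - zstar‖^2 / (lam * (1 - lam) * K) +
        4 * (γ * L)^τ * D^2 / (1 - lam) +
        4 * lam * (γ * L)^(2 * τ) * D^2 / (1 - lam) +
        16 * K * (γ * L)^τ * D^2 := by
  intro K hK
  have hgpos : 0 < γ * L := mul_pos hγ0 hL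
  have hg1 : γ * L < 1 := (lt_div_iff₀ hL).mp hγL
  have hD0 : 0 ≤ D := le_trans (norm_nonneg _) (hD 0)
  have hQ : 0 < 1 - lam := by linarith
  have hres : ∀ x : E, x - J x = γ • F (J x) := fun x => sub_eq_of_eq_add' (hJ x).symm
  -- J fixes zstar
  have hJstar : J zstar = zstar := by
    have h2 : J zstar - zstar = -(γ • F (J zstar)) := by
      rw [← hres zstar]; abel
    have h3 := hρ (J zstar) zstar
    rw [hzstar, sub_zero, h2] at h3
    rw [inner_neg_right, real_inner_smul_right, real_inner_self_eq_norm_sq] at h3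
    have h4 : F (J zstar) = 0 := by
      have h5 : ‖F (J zstar)‖^2 ≤ 0 := by nlinarith [sq_nonneg ‖F (J zstar)‖]
      have h6 : ‖F (J zstar)‖ = 0 := by nlinarith [norm_nonneg (F (J zstar))]
      exact norm_eq_zero.mp h6
    have := hJ zstar
    rw [h4, smul_zero, add_zero] at this
    exact this
  -- J nonexpansive
  have hJne : ∀ a b : E, ‖J a - J b‖ ≤ ‖a - b‖ := by
    intro a b
    have hab : a - b = (J a - J b) + γ • (F (J a) - F (J b)) := by
      rw [smul_sub, ← hres a, ← hres b]; abel
    have hiv : ρ * ‖F (J a) - F (J b)‖^2 ≤ ⟪F (J a) - F (J b), J a - J b⟫_ℝ := hρ (J a) (J b)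
    have hexp : ‖a - b‖^2 = ‖J a - J b‖^2 + 2*(γ*⟪F (J a) - F (J b), J a - J b⟫_ℝ) + γ^2*‖F (J a) - F (J b)‖^2 := by
      rw [hab, norm_add_sq_real, real_inner_smul_right, norm_smul, Real.norm_eq_abs, abs_of_pos hγ0,
        real_inner_comm]
      ring
    have h5 : 0 ≤ γ * (2*ρ+γ) * ‖F (J a) - F (J b)‖^2 :=
      mul_nonneg (mul_nonneg hγ0.le (by linarith)) (sq_nonneg _)
    have h6 : γ * (ρ * ‖F (J a) - F (J b)‖^2) ≤ γ * ⟪F (J a) - F (J b), J a - J b⟫_ℝ :=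
      mul_le_mul_of_nonneg_left hiv hγ0.le
    have h7 : ‖J a - J b‖^2 ≤ ‖a - b‖^2 := by nlinarith
    nlinarith [norm_nonneg (J a - J b), norm_nonneg (a - b)]
  have hJD : ∀ x : E, ‖J x - zstar‖ ≤ ‖x - zstar‖ := by
    intro x
    have := hJne x zstar
    rwa [hJstar] at this
  -- residual norm
  have hqgD : ∀ k, ‖J (z k) - z k‖ ≤ (γ*L) * D := by
    intro k
    have h1 : ‖J (z k) - z k‖ = γ * ‖F (J (z k))‖ := by
      rw [norm_sub_rev, hres (z k), norm_smul, Real.norm_eq_abs, abs_of_pos hγ0]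
    have h2 : ‖F (J (z k))‖ ≤ L * ‖J (z k) - zstar‖ := by
      have := hF (J (z k)) zstar
      rwa [hzstar, sub_zero] at this
    have h3 : ‖J (z k) - zstar‖ ≤ D := (hJD (z k)).trans (hD k)
    calc ‖J (z k) - z k‖ = γ * ‖F (J (z k))‖ := h1
      _ ≤ γ * (L * D) := by
          refine mul_le_mul_of_nonneg_left (h2.trans ?_) hγ0.le
          exact mul_le_mul_of_nonneg_left h3 hL.le
      _ = (γ*L) * D := by ring
  have hqD : ∀ k, ‖J (z k) - z k‖ ≤ D := by
    intro k
    exact (hqgD k).trans (by nlinarith)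
  -- approximation lemma
  have hA : ∀ k, ‖w k τ - J (z k)‖ ≤ (γ*L) ^ τ * ‖J (z k) - z k‖ := by
    intro k
    have main : ∀ t, t ≤ τ → ‖w k t - J (z k)‖ ≤ (γ*L) ^ t * ‖J (z k) - z k‖ := by
      intro t
      induction t with
      | zero => intro _; rw [hw0 k, pow_zero, one_mul, norm_sub_rev]
      | succ t ih =>
        intro ht
        have ht' : t < τ := lt_of_lt_of_le (Nat.lt_succ_self t) ht
        have ih' := ih ht'.le
        have hid : w k (t+1) - J (z k) = γ • (F (J (z k)) - F (w k t)) := by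
          rw [hw k t ht', smul_sub, ← hres (z k)]; abel
        calc ‖w k (t+1) - J (z k)‖ = γ * ‖F (J (z k)) - F (w k t)‖ := by
              rw [hid, norm_smul, Real.norm_eq_abs, abs_of_pos hγ0]
          _ ≤ γ * (L * ‖J (z k) - w k t‖) :=
              mul_le_mul_of_nonneg_left (hF _ _) hγ0.le
          _ = (γ*L) * ‖w k t - J (z k)‖ := by rw [norm_sub_rev]; ring
          _ ≤ (γ*L) * ((γ*L)^t * ‖J (z k) - z k‖) :=
              mul_le_mul_of_nonneg_left ih' hgpos.le
          _ = (γ*L)^(t+1) * ‖J (z k) - z k‖ := by ring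
    exact main τ le_rfl
  -- exact step
  set zt : ℕ → E := fun k => (1 - lam) • z k + lam • J (z k) with hzt
  have hip : ∀ k, (1/2) * ‖J (z k) - z k‖^2 ≤ ⟪z k - J (z k), z k - zstar⟫_ℝ := by
    intro k
    have h1 : z k - J (z k) = γ • F (J (z k)) := hres (z k)
    have h2 : z k - zstar = (J (z k) - zstar) + γ • F (J (z k)) := by rw [← h1]; abel
    have h3 : ρ * ‖F (J (z k))‖^2 ≤ ⟪F (J (z k)), J (z k) - zstar⟫_ℝ := by
      have := hρ (J (z k)) zstar
      rwa [hzstar, sub_zero] at this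
    have h4 : ⟪z k - J (z k), z k - zstar⟫_ℝ = γ * ⟪F (J (z k)), J (z k) - zstar⟫_ℝ + γ^2 * ‖F (J (z k))‖^2 := by
      rw [h1, h2, real_inner_smul_left, inner_add_right, real_inner_smul_right,
        real_inner_self_eq_norm_sq]
      ring
    have h5 : ‖J (z k) - z k‖^2 = γ^2 * ‖F (J (z k))‖^2 := by
      rw [norm_sub_rev, h1, norm_smul, Real.norm_eq_abs, abs_of_pos hγ0]; ring
    have h6 : 0 ≤ γ * (ρ + γ/2) * ‖F (J (z k))‖^2 :=
      mul_nonneg (mul_nonneg hγ0.le (by linarith)) (sq_nonneg _)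
    nlinarith [mul_le_mul_of_nonneg_left h3 hγ0.le]
  have hexact : ∀ k, ‖zt k - zstar‖^2 ≤ ‖z k - zstar‖^2 - lam*(1-lam)*‖J (z k) - z k‖^2 := by
    intro k
    have h1 : zt k - zstar = (z k - zstar) - lam • (z k - J (z k)) := by
      simp only [hzt]; module
    have h2 : ‖zt k - zstar‖^2 = ‖z k - zstar‖^2 - 2*(lam * ⟪z k - J (z k), z k - zstar⟫_ℝ) + lam^2 * ‖J (z k) - z k‖^2 := by
      rw [h1, norm_sub_sq_real, real_inner_smul_right, norm_smul, Real.norm_eq_abs, abs_of_pos hlam0,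
        real_inner_comm, norm_sub_rev (z k) (J (z k))]
      ring
    have h3 := hip k
    linarith [mul_le_mul_of_nonneg_left h3 hlam0.le, h2]
  -- error bound
  have he : ∀ k, ‖z (k+1) - zt k‖ ≤ lam * (γ*L)^τ * D := by
    intro k
    have h1 : z (k+1) - zt k = lam • (w k τ - J (z k)) := by
      rw [hz k]; simp only [hzt]; module
    rw [h1, norm_smul, Real.norm_eq_abs, abs_of_pos hlam0]
    calc lam * ‖w k τ - J (z k)‖ ≤ lam * ((γ*L)^τ * ‖J (z k) - z k‖) :=
          mul_le_mul_of_nonneg_left (hA k) hlam0.le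
      _ ≤ lam * ((γ*L)^τ * D) :=
          mul_le_mul_of_nonneg_left (mul_le_mul_of_nonneg_left (hqD k) (by positivity)) hlam0.le
      _ = lam * (γ*L)^τ * D := by ring
  -- one-step inequality
  set Err : ℝ := 2*lam*(γ*L)^τ*D^2 + lam^2*((γ*L)^τ)^2*D^2 with hErr
  have hstep : ∀ k, lam*(1-lam)*‖J (z k) - z k‖^2 ≤ ‖z k - zstar‖^2 - ‖z (k+1) - zstar‖^2 + Err := by
    intro k
    have htri : ‖z (k+1) - zstar‖ ≤ ‖zt k - zstar‖ + ‖z (k+1) - zt k‖ := by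
      have h0 : z (k+1) - zstar = (zt k - zstar) + (z (k+1) - zt k) := by abel
      rw [h0]; exact norm_add_le _ _
    have hztD : ‖zt k - zstar‖ ≤ D := by
      have hq2 : 0 ≤ lam*(1-lam)*‖J (z k) - z k‖^2 := by positivity
      have hb1 : ‖z k - zstar‖^2 ≤ D^2 := pow_le_pow_left₀ (norm_nonneg _) (hD k) 2
      have hb2 : ‖zt k - zstar‖^2 ≤ D^2 := by linarith [hexact k]
      exact (pow_le_pow_iff_left₀ (norm_nonneg _) hD0 two_ne_zero).mp hb2
    have hsq : ‖z (k+1) - zstar‖^2 ≤ (‖zt k - zstar‖ + ‖z (k+1) - zt k‖)^2 :=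
      pow_le_pow_left₀ (norm_nonneg _) htri 2
    have h2ab : ‖zt k - zstar‖ * ‖z (k+1) - zt k‖ ≤ D * (lam*(γ*L)^τ*D) :=
      mul_le_mul hztD (he k) (norm_nonneg _) hD0
    have hbb : ‖z (k+1) - zt k‖^2 ≤ (lam*(γ*L)^τ*D)^2 :=
      pow_le_pow_left₀ (norm_nonneg _) (he k) 2
    have hx := hexact k
    have hexp2 : (‖zt k - zstar‖ + ‖z (k+1) - zt k‖)^2 = ‖zt k - zstar‖^2 + 2*(‖zt k - zstar‖ * ‖z (k+1) - zt k‖) + ‖z (k+1) - zt k‖^2 := by ring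
    rw [hErr]
    linarith [hsq, hexp2, h2ab, hbb]
  -- summation
  have hsum : ∀ n : ℕ, lam*(1-lam) * ∑ k ∈ Finset.range n, ‖J (z k) - z k‖^2 ≤ ‖z 0 - zstar‖^2 - ‖z n - zstar‖^2 + n * Err := by
    intro n
    induction n with
    | zero => simp
    | succ n ih =>
      rw [Finset.sum_range_succ, mul_add]
      have h1 := hstep n
      push_cast
      push_cast at ih
      linarith
  -- some index with small residual
  have hKpos : (0:ℝ) < K := by exact_mod_cast Nat.pos_of_ne_zero (by omega)
  have havg : ∃ k ∈ Finset.range K, lam*(1-lam)*‖J (z k) - z k‖^2 ≤ (‖z 0 - zstar‖^2 + K*Err)/K := by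
    apply Finset.exists_le_of_sum_le (Finset.nonempty_range_iff.mpr (by omega))
    rw [Finset.sum_const, Finset.card_range, nsmul_eq_mul, mul_div_cancel₀ _ hKpos.ne']
    rw [← Finset.mul_sum]
    linarith [hsum K, sq_nonneg ‖z K - zstar‖]
  obtain ⟨k, hkmem, hkle⟩ := havg
  have hkK : k < K := Finset.mem_range.mp hkmem
  -- almost monotone residuals
  have hZT : ∀ k, ‖J (zt k) - zt k‖ ≤ ‖J (z k) - z k‖ := by
    intro k
    have h1 : zt k - J (zt k) = (1-lam) • (z k - J (z k)) + (J (z k) - J (zt k)) := by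
      simp only [hzt]; module
    have h2 : ‖z k - zt k‖ = lam * ‖z k - J (z k)‖ := by
      have h3 : z k - zt k = lam • (z k - J (z k)) := by simp only [hzt]; module
      rw [h3, norm_smul, Real.norm_eq_abs, abs_of_pos hlam0]
    have h4 := hJne (z k) (zt k)
    rw [h2] at h4
    calc ‖J (zt k) - zt k‖ = ‖zt k - J (zt k)‖ := norm_sub_rev _ _
      _ ≤ ‖(1-lam) • (z k - J (z k))‖ + ‖J (z k) - J (zt k)‖ := by rw [h1]; exact norm_add_le _ _
      _ = (1-lam) * ‖z k - J (z k)‖ + ‖J (z k) - J (zt k)‖ := by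
          rw [norm_smul, Real.norm_eq_abs, abs_of_pos hQ]
      _ ≤ (1-lam) * ‖z k - J (z k)‖ + lam * ‖z k - J (z k)‖ := by linarith
      _ = ‖J (z k) - z k‖ := by rw [norm_sub_rev]; ring
  have hmono : ∀ k, ‖J (z (k+1)) - z (k+1)‖ ≤ ‖J (z k) - z k‖ + 2 * (lam*(γ*L)^τ*D) := by
    intro k
    have h0 : J (z (k+1)) - z (k+1) = (J (z (k+1)) - J (zt k)) + (J (zt k) - zt k) + (zt k - z (k+1)) := by abel
    have h1 : ‖J (z (k+1)) - z (k+1)‖ ≤ ‖J (z (k+1)) - J (zt k)‖ + ‖J (zt k) - zt k‖ + ‖zt k - z (k+1)‖ := by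
      rw [h0]; exact norm_add₃_le
    have h2 : ‖J (z (k+1)) - J (zt k)‖ ≤ ‖z (k+1) - zt k‖ := hJne _ _
    have h3 : ‖zt k - z (k+1)‖ = ‖z (k+1) - zt k‖ := norm_sub_rev _ _
    have h4 := he k
    have h5 := hZT k
    linarith
  have hkey : ∀ a m : ℕ, ‖J (z (a+m)) - z (a+m)‖ ≤ ‖J (z a) - z a‖ + m * (2 * (lam*(γ*L)^τ*D)) := by
    intro a m
    induction m with
    | zero => simp
    | succ m ih =>
      have := hmono (a+m)
      push_cast
      push_cast at ih
      calc ‖J (z (a+(m+1))) - z (a+(m+1))‖ = ‖J (z ((a+m)+1)) - z ((a+m)+1)‖ := by ring_nf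
        _ ≤ ‖J (z (a+m)) - z (a+m)‖ + 2 * (lam*(γ*L)^τ*D) := this
        _ ≤ ‖J (z a) - z a‖ + (m+1) * (2 * (lam*(γ*L)^τ*D)) := by linarith
  have hlast : ‖J (z K) - z K‖ ≤ ‖J (z k) - z k‖ + K * (2 * (lam*(γ*L)^τ*D)) := by
    have h1 := hkey k (K - k)
    rw [Nat.add_sub_cancel' hkK.le] at h1
    have h2 : ((K - k : ℕ) : ℝ) ≤ (K : ℝ) := by
      exact_mod_cast Nat.cast_le.mpr (Nat.sub_le K k)
    have h3 : (0:ℝ) ≤ 2 * (lam*(γ*L)^τ*D) := by positivity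
    have h4 := mul_le_mul_of_nonneg_right h2 h3
    linarith
  -- final assembly
  have hgτpos : (0:ℝ) ≤ (γ*L)^τ := by positivity
  have hRHS4 : (0:ℝ) ≤ 16 * K * (γ*L)^τ * D^2 := by positivity
  have hT1 : (0:ℝ) ≤ ‖z 0 - zstar‖^2 / (lam * (1 - lam) * K) := by positivity
  have hT2 : (0:ℝ) ≤ 4 * (γ * L)^τ * D^2 / (1 - lam) := by positivity
  have hT3 : (0:ℝ) ≤ 4 * lam * (γ * L)^(2 * τ) * D^2 / (1 - lam) := by positivity
  rcases le_or_gt (1/16 : ℝ) ((γ*L)^τ * K) with hcase | hcase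
  · -- trivial case
    have h1 : ‖J (z K) - z K‖^2 ≤ D^2 := by
      nlinarith [hqD K, norm_nonneg (J (z K) - z K)]
    have h2 : D^2 ≤ 16 * K * (γ*L)^τ * D^2 := by nlinarith [sq_nonneg D]
    linarith
  · -- main case
    have hq2 : ‖J (z k) - z k‖^2 ≤ (‖z 0 - zstar‖^2 + K*Err)/(K*(lam*(1-lam))) := by
      rw [le_div_iff₀ (by positivity)]
      rw [le_div_iff₀ hKpos] at hkle
      linarith [hkle]
    have hsplit : (‖z 0 - zstar‖^2 + K*Err)/(K*(lam*(1-lam))) =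
        ‖z 0 - zstar‖^2 / (lam * (1 - lam) * K) + 2*(γ*L)^τ*D^2/(1-lam) + lam*((γ*L)^τ)^2*D^2/(1-lam) := by
      rw [hErr]
      field_simp
      ring
    have hq3 : ‖J (z k) - z k‖^2 ≤ ‖z 0 - zstar‖^2 / (lam * (1 - lam) * K) + 2*(γ*L)^τ*D^2/(1-lam) + lam*((γ*L)^τ)^2*D^2/(1-lam) := by
      rw [← hsplit]; exact hq2
    -- bound the drift
    set B : ℝ := K * (2 * (lam*(γ*L)^τ*D)) with hB
    have hB0 : 0 ≤ B := by positivity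
    have hBsmall : B ≤ D/8 := by
      rw [hB]
      have e1 : (γ*L)^τ * K * D ≤ (1/16)*D := mul_le_mul_of_nonneg_right hcase.le hD0
      have e2 : lam * ((γ*L)^τ * K * D) ≤ 1 * ((γ*L)^τ * K * D) :=
        mul_le_mul_of_nonneg_right hlam1.le (by positivity)
      nlinarith [e1, e2]
    have hlast2 : ‖J (z K) - z K‖^2 ≤ (‖J (z k) - z k‖ + B)^2 :=
      pow_le_pow_left₀ (norm_nonneg _) hlast 2
    have hdrift : ‖J (z K) - z K‖^2 ≤ ‖J (z k) - z k‖^2 + 2*D*B + (D/8)*B := by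
      have hex : (‖J (z k) - z k‖ + B)^2 = ‖J (z k) - z k‖^2 + 2*(‖J (z k) - z k‖*B) + B^2 := by ring
      have e3 : ‖J (z k) - z k‖*B ≤ D*B := mul_le_mul_of_nonneg_right (hqD k) hB0
      have e4 : B*B ≤ (D/8)*B := mul_le_mul_of_nonneg_right hBsmall hB0
      have e5 : B^2 = B*B := sq B
      linarith [hlast2, hex, e3, e4, e5]
    have hBval : 2*D*B + (D/8)*B ≤ 5 * K * (γ*L)^τ * D^2 := by
      rw [hB]
      have e5 : lam * ((γ*L)^τ*D^2*K) ≤ 1*((γ*L)^τ*D^2*K) :=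
        mul_le_mul_of_nonneg_right hlam1.le (by positivity)
      nlinarith [e5]
    have hpowid : (γ*L)^(2*τ) = ((γ*L)^τ)^2 := by
      rw [two_mul, pow_add]; ring
    have ht2 : 2*(γ*L)^τ*D^2/(1-lam) ≤ 4 * (γ * L)^τ * D^2 / (1 - lam) :=
      (div_le_div_iff_of_pos_right hQ).mpr (by linarith [mul_nonneg hgτpos (sq_nonneg D)])
    have ht3 : lam*((γ*L)^τ)^2*D^2/(1-lam) ≤ 4 * lam * (γ * L)^(2*τ) * D^2 / (1 - lam) := by
      rw [hpowid]
      refine (div_le_div_iff_of_pos_right hQ).mpr ?_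
      linarith [mul_nonneg hlam0.le (mul_nonneg (sq_nonneg ((γ*L)^τ)) (sq_nonneg D))]
    have hfin : 5 * K * (γ*L)^τ * D^2 ≤ 16 * K * (γ*L)^τ * D^2 := by
      linarith [mul_nonneg (mul_nonneg hKpos.le hgτpos) (sq_nonneg D)]
    linarith [hdrift, hBval, hq3, ht2, ht3, hfin]
end

section
/- Let F : E → E be L-Lipschitz and ρ-comonotone with F z⋆ = 0, let γ ∈ (0, 1/L], λ ∈ (0, 1/2), and suppose 2ρ > −(1 − 2λ)γ and 2ρ ≥ 2λγ − (1 − γ²L²)γ. Consider the Lookahead-GDA iteration with τ = 2 inner steps: z^{k+1} = z^k − λγ F z^k − λγ F(z^k − γ F z^k), and set z̄^k := z^k − γ F z^k. Then for every K ≥ 1: (1/K) Σ_{k=0}^{K−1} ‖F z̄^k‖² ≤ ‖z^0 − z⋆‖² / (λγ((1 − 2λ)γ + 2ρ)K). -/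
set_option maxHeartbeats 1000000


open InnerProductSpace

/-- rate for Lookahead-GDA with `τ = 2` inner steps,
`z^{k+1} = z^k − λγ F z^k − λγ F(z^k − γ F z^k)`, `z̄^k = z^k − γ F z^k`,
under `L`-Lipschitzness, `ρ`-comonotonicity, `γ ∈ (0, 1/L]`, `λ ∈ (0, 1/2)`,
`2ρ > −(1 − 2λ)γ` and `2ρ ≥ 2λγ − (1 − γ²L²)γ`:
`(1/K) Σ_{k<K} ‖F z̄^k‖² ≤ ‖z^0 − z⋆‖²/(λγ((1 − 2λ)γ + 2ρ)K)`. -/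
theorem stmt10 {E : Type*} [NormedAddCommGroup E] [InnerProductSpace ℝ E]
    (F : E → E) (L ρ γ lam : ℝ) (hL : 0 < L)
    (hF : ∀ z z' : E, ‖F z - F z'‖ ≤ L * ‖z - z'‖)
    (hρ : ∀ z z' : E, ⟪F z - F z', z - z'⟫_ℝ ≥ ρ * ‖F z - F z'‖^2)
    (zstar : E) (hzstar : F zstar = 0)
    (hγ0 : 0 < γ) (hγL : γ ≤ 1 / L)
    (hlam0 : 0 < lam) (hlam1 : lam < 1 / 2)
    (hcond1 : 2 * ρ > -((1 - 2 * lam) * γ))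
    (hcond2 : 2 * ρ ≥ 2 * lam * γ - (1 - γ^2 * L^2) * γ)
    (z zbar : ℕ → E)
    (hz : ∀ k, z (k + 1) =
      z k - (lam * γ) • F (z k) - (lam * γ) • F (z k - γ • F (z k)))
    (hzbar : ∀ k, zbar k = z k - γ • F (z k)) :
    ∀ K : ℕ, 1 ≤ K →
      (1 / (K : ℝ)) * ∑ k ∈ Finset.range K, ‖F (zbar k)‖^2 ≤
        ‖z 0 - zstar‖^2 / (lam * γ * ((1 - 2 * lam) * γ + 2 * ρ) * K) := by
  intro K hK
  set c : ℝ := lam * γ * ((1 - 2 * lam) * γ + 2 * ρ) with hc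
  have hcpos : 0 < c := by
    apply mul_pos (mul_pos hlam0 hγ0); linarith
  have hγL1 : γ * L ≤ 1 := by
    rw [le_div_iff₀ hL] at hγL; linarith
  have hstep : ∀ k, ‖z (k+1) - zstar‖^2 + c * ‖F (zbar k)‖^2 ≤ ‖z k - zstar‖^2 := by
    intro k
    set a := F (z k) with haa
    set b := F (zbar k) with hbb
    set u := z k - zstar with hu
    have ha : ⟪a, u⟫_ℝ ≥ ρ * ‖a‖^2 := by
      have := hρ (z k) zstar; rwa [hzstar, sub_zero] at this
    have hb : ⟪b, u⟫_ℝ - γ * ⟪b, a⟫_ℝ ≥ ρ * ‖b‖^2 := by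
      have := hρ (zbar k) zstar
      rw [hzstar, sub_zero] at this
      have h2 : zbar k - zstar = u - γ • a := by
        rw [hzbar]; simp [hu]; abel
      rw [h2, inner_sub_right, real_inner_smul_right] at this
      exact this
    have hl : ‖a - b‖^2 ≤ (γ * L)^2 * ‖a‖^2 := by
      have h1 := hF (z k) (zbar k)
      have h2 : z k - zbar k = γ • a := by rw [hzbar]; abel
      rw [h2, norm_smul, Real.norm_eq_abs, abs_of_pos hγ0] at h1
      have h3 : ‖a - b‖ ≤ (γ * L) * ‖a‖ := by nlinarith
      nlinarith [norm_nonneg (a - b), norm_nonneg a, mul_nonneg (mul_nonneg hγ0.le hL.le) (norm_nonneg a)]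
    have hab : ‖a - b‖^2 = ‖a‖^2 - 2 * ⟪a, b⟫_ℝ + ‖b‖^2 := norm_sub_sq_real a b
    have hexp : ‖z (k+1) - zstar‖^2
        = ‖u‖^2 - 2 * (lam * γ * ⟪u, a⟫_ℝ + lam * γ * ⟪u, b⟫_ℝ)
          + (lam * γ)^2 * (‖a‖^2 + 2 * ⟪a, b⟫_ℝ + ‖b‖^2) := by
      have h2 : z (k+1) - zstar = u - (lam * γ) • (a + b) := by
        rw [hz k, ← hzbar k]; simp [hu, smul_add]; abel
      rw [h2, norm_sub_sq_real, inner_smul_right, norm_smul]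
      rw [inner_add_right, Real.norm_eq_abs, mul_pow, sq_abs]
      rw [norm_add_sq_real a b]
      ring
    have hsym : ⟪b, a⟫_ℝ = ⟪a, b⟫_ℝ := real_inner_comm a b
    have hua : ⟪u, a⟫_ℝ = ⟪a, u⟫_ℝ := real_inner_comm a u
    have hub : ⟪u, b⟫_ℝ = ⟪b, u⟫_ℝ := real_inner_comm b u
    rw [hexp, hua, hub, hc]
    have hA : (0:ℝ) ≤ ‖a‖^2 := sq_nonneg _
    have hB : (0:ℝ) ≤ ‖b‖^2 := sq_nonneg _
    -- key inequality: 2⟪a,b⟫ ≥ (1 - γ²L²)‖a‖² + ‖b‖²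
    have hkey : 2 * ⟪a, b⟫_ℝ ≥ (1 - γ^2 * L^2) * ‖a‖^2 + ‖b‖^2 := by nlinarith
    rw [hsym] at hb
    nlinarith [mul_pos hlam0 hγ0, mul_le_mul_of_nonneg_left hkey (by nlinarith : (0:ℝ) ≤ lam * γ^2 * (1 - lam)),
      mul_le_mul_of_nonneg_left ha (by positivity : (0:ℝ) ≤ 2 * lam * γ),
      mul_le_mul_of_nonneg_left hb (by positivity : (0:ℝ) ≤ 2 * lam * γ),
      mul_le_mul_of_nonneg_left hcond2 (by positivity : (0:ℝ) ≤ lam * γ * ‖a‖^2),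
      mul_nonneg (mul_nonneg hlam0.le hγ0.le) hA]
  have hsum : ∀ N : ℕ, c * ∑ k ∈ Finset.range N, ‖F (zbar k)‖^2 + ‖z N - zstar‖^2
      ≤ ‖z 0 - zstar‖^2 := by
    intro N
    induction N with
    | zero => simp
    | succ n ih =>
      rw [Finset.sum_range_succ]
      have := hstep n
      nlinarith
  have hKpos : (0:ℝ) < K := by exact_mod_cast Nat.lt_of_lt_of_le Nat.zero_lt_one hK
  have hS : ∑ k ∈ Finset.range K, ‖F (zbar k)‖^2 ≤ ‖z 0 - zstar‖^2 / c := by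
    rw [le_div_iff₀ hcpos]
    have := hsum K
    linarith [sq_nonneg ‖z K - zstar‖]
  have : (1 / (K:ℝ)) * ∑ k ∈ Finset.range K, ‖F (zbar k)‖^2
      ≤ (‖z 0 - zstar‖^2 / c) / K := by
    rw [one_div, inv_mul_eq_div]
    exact div_le_div_of_nonneg_right hS hKpos.le |>.trans_eq rfl
  calc (1 / (K:ℝ)) * ∑ k ∈ Finset.range K, ‖F (zbar k)‖^2
      ≤ (‖z 0 - zstar‖^2 / c) / K := this
    _ = ‖z 0 - zstar‖^2 / (c * K) := by rw [div_div]
end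

section
/- Let E be a finite-dimensional real inner product space, let Alg : E → E be nonexpansive with at least one fixed point, let τ ≥ 1 and λ ∈ (0,1). Then the Lookahead iterates z^{k+1} = (1 − λ)z^k + λ Alg^τ(z^k) converge to some point z⋆ with Alg^τ(z⋆) = z⋆. If moreover every fixed point of Alg^τ is a fixed point of Alg, then Alg(z⋆) = z⋆. -/
open Filter

lemma combo_sq {E : Type*} [NormedAddCommGroup E] [InnerProductSpace ℝ E] (t : ℝ) (a b : E) :
    ‖(1-t)•a + t•b‖^2 = (1-t)*‖a‖^2 + t*‖b‖^2 - t*(1-t)*‖a-b‖^2 := by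
  rw [norm_add_sq_real, norm_sub_sq_real, norm_smul, norm_smul,
    real_inner_smul_left, real_inner_smul_right]
  simp [mul_pow, sq_abs]
  ring

/-- Lookahead with a nonexpansive base optimizer `Alg` possessing
a fixed point: the iterates `z^{k+1} = (1 − λ)z^k + λ Alg^τ(z^k)` converge to
some `z⋆` with `Alg^τ(z⋆) = z⋆`; if moreover every fixed point of `Alg^τ` is a
fixed point of `Alg`, then `Alg(z⋆) = z⋆`. -/
theorem stmt11 {E : Type*} [NormedAddCommGroup E] [InnerProductSpace ℝ E]
    [FiniteDimensional ℝ E]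
    (Alg : E → E) (hA : ∀ x y : E, ‖Alg x - Alg y‖ ≤ ‖x - y‖)
    (hfix : ∃ w, Alg w = w)
    (τ : ℕ) (hτ : 1 ≤ τ)
    (lam : ℝ) (hlam0 : 0 < lam) (hlam1 : lam < 1)
    (z : ℕ → E)
    (hz : ∀ k, z (k + 1) = (1 - lam) • z k + lam • (Alg^[τ] (z k))) :
    ∃ zstar : E, Alg^[τ] zstar = zstar ∧
      Tendsto z atTop (nhds zstar) ∧
      ((∀ w : E, Alg^[τ] w = w → Alg w = w) → Alg zstar = zstar) := by
  set T : E → E := Alg^[τ] with hTdef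
  -- T is nonexpansive
  have hTne : ∀ x y : E, ‖T x - T y‖ ≤ ‖x - y‖ := by
    have : ∀ n (x y : E), ‖Alg^[n] x - Alg^[n] y‖ ≤ ‖x - y‖ := by
      intro n
      induction n with
      | zero => simp
      | succ n ih =>
        intro x y
        rw [Function.iterate_succ_apply', Function.iterate_succ_apply']
        exact (hA _ _).trans (ih x y)
    exact this τ
  obtain ⟨w, hw⟩ := hfix
  have hTw : T w = w := Function.iterate_fixed hw τ
  -- recursion in centered form
  have hrec : ∀ (p : E) (k : ℕ), z (k+1) - p = (1-lam) • (z k - p) + lam • (T (z k) - p) := by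
    intro p k
    rw [hz k]
    module
  -- Fejér monotonicity (squared) with asymptotic regularity term
  have hFsq : ∀ p : E, T p = p → ∀ k : ℕ,
      ‖z (k+1) - p‖^2 ≤ ‖z k - p‖^2 - lam*(1-lam)*‖z k - T (z k)‖^2 := by
    intro p hp k
    rw [hrec p k, combo_sq]
    have h1 : ‖T (z k) - p‖ ≤ ‖z k - p‖ := by
      calc ‖T (z k) - p‖ = ‖T (z k) - T p‖ := by rw [hp]
        _ ≤ ‖z k - p‖ := hTne _ _
    have h2 : (z k - p) - (T (z k) - p) = z k - T (z k) := by abel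
    rw [h2]
    have h1sq : ‖T (z k) - p‖^2 ≤ ‖z k - p‖^2 :=
      pow_le_pow_left₀ (norm_nonneg _) h1 2
    nlinarith [h1sq]
  -- Fejér monotonicity (norm)
  have hF : ∀ p : E, T p = p → ∀ k : ℕ, ‖z (k+1) - p‖ ≤ ‖z k - p‖ := by
    intro p hp k
    have h1 : ‖T (z k) - p‖ ≤ ‖z k - p‖ := by
      calc ‖T (z k) - p‖ = ‖T (z k) - T p‖ := by rw [hp]
        _ ≤ ‖z k - p‖ := hTne _ _
    calc ‖z (k+1) - p‖ = ‖(1-lam) • (z k - p) + lam • (T (z k) - p)‖ := by rw [hrec p k]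
      _ ≤ ‖(1-lam) • (z k - p)‖ + ‖lam • (T (z k) - p)‖ := norm_add_le _ _
      _ = (1-lam) * ‖z k - p‖ + lam * ‖T (z k) - p‖ := by
          rw [norm_smul, norm_smul, Real.norm_eq_abs, Real.norm_eq_abs,
            abs_of_pos hlam0, abs_of_pos (by linarith : (0:ℝ) < 1 - lam)]
      _ ≤ (1-lam) * ‖z k - p‖ + lam * ‖z k - p‖ := by nlinarith
      _ = ‖z k - p‖ := by ring
  -- the squared distance to w converges
  set f : ℕ → ℝ := fun k => ‖z k - w‖^2 with hfdef
  have hfanti : Antitone f := by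
    apply antitone_nat_of_succ_le
    intro k
    have h := hFsq w hTw k
    show ‖z (k+1) - w‖^2 ≤ ‖z k - w‖^2
    nlinarith [sq_nonneg ‖z k - T (z k)‖, mul_pos hlam0 (by linarith : (0:ℝ) < 1 - lam)]
  have hfbdd : BddBelow (Set.range f) := ⟨0, by rintro x ⟨k, rfl⟩; exact pow_nonneg (norm_nonneg _) 2⟩
  have hftend : Tendsto f atTop (nhds (⨅ k, f k)) := tendsto_atTop_ciInf hfanti hfbdd
  have hftend' : Tendsto (fun k => f (k+1)) atTop (nhds (⨅ k, f k)) :=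
    (tendsto_add_atTop_iff_nat 1).mpr hftend
  have hdiff : Tendsto (fun k => f k - f (k+1)) atTop (nhds 0) := by
    simpa using hftend.sub hftend'
  -- asymptotic regularity
  have hreg2 : Tendsto (fun k => lam*(1-lam)*‖z k - T (z k)‖^2) atTop (nhds 0) := by
    apply squeeze_zero (fun k => mul_nonneg (mul_nonneg hlam0.le (by linarith)) (sq_nonneg _)) _ hdiff
    intro k
    have := hFsq w hTw k
    simp only [hfdef]
    linarith
  have hc : (0:ℝ) < lam*(1-lam) := mul_pos hlam0 (by linarith)
  have hreg2' : Tendsto (fun k => ‖z k - T (z k)‖^2) atTop (nhds 0) := by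
    have h := hreg2.const_mul (lam*(1-lam))⁻¹
    simp only [← mul_assoc, inv_mul_cancel₀ hc.ne', one_mul, mul_zero] at h
    exact h
  have hreg : Tendsto (fun k => ‖z k - T (z k)‖) atTop (nhds 0) := by
    have h := (Real.continuous_sqrt.tendsto 0).comp hreg2'
    simpa [Function.comp_def, Real.sqrt_sq (norm_nonneg _)] using h
  -- boundedness
  have hbd : ∀ k, z k ∈ Metric.closedBall w ‖z 0 - w‖ := by
    intro k
    rw [Metric.mem_closedBall, dist_eq_norm]
    induction k with
    | zero => exact le_refl _
    | succ k ih => exact (hF w hTw k).trans ih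
  -- compactness: convergent subsequence
  obtain ⟨zstar, -, φ, hφ, hconv⟩ :=
    (isCompact_closedBall w ‖z 0 - w‖).tendsto_subseq hbd
  -- T is continuous
  have hTcont : Continuous T := by
    have : LipschitzWith 1 T := by
      intro x y
      rw [edist_dist, edist_dist, dist_eq_norm, dist_eq_norm]
      simp only [ENNReal.coe_one, one_mul]
      exact ENNReal.ofReal_le_ofReal (hTne x y)
    exact this.continuous
  -- zstar is a fixed point of T
  have hsubreg : Tendsto (fun j => z (φ j) - T (z (φ j))) atTop (nhds 0) := by
    rw [tendsto_zero_iff_norm_tendsto_zero]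
    exact hreg.comp hφ.tendsto_atTop
  have hTz1 : Tendsto (fun j => T (z (φ j))) atTop (nhds (T zstar)) :=
    (hTcont.tendsto zstar).comp hconv
  have hTz2 : Tendsto (fun j => T (z (φ j))) atTop (nhds zstar) := by
    have : Tendsto (fun j => z (φ j) - (z (φ j) - T (z (φ j)))) atTop (nhds (zstar - 0)) :=
      hconv.sub hsubreg
    simpa using this
  have hTzstar : T zstar = zstar := tendsto_nhds_unique hTz1 hTz2
  -- full convergence
  set r : ℕ → ℝ := fun k => ‖z k - zstar‖ with hrdef
  have hranti : Antitone r := antitone_nat_of_succ_le (hF zstar hTzstar)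
  have hrbdd : BddBelow (Set.range r) := ⟨0, by rintro x ⟨k, rfl⟩; exact norm_nonneg _⟩
  have hrtend : Tendsto r atTop (nhds (⨅ k, r k)) := tendsto_atTop_ciInf hranti hrbdd
  have hrsub : Tendsto (r ∘ φ) atTop (nhds (⨅ k, r k)) := hrtend.comp hφ.tendsto_atTop
  have hrsub0 : Tendsto (r ∘ φ) atTop (nhds 0) := by
    have := tendsto_iff_norm_sub_tendsto_zero.mp hconv
    simpa [Function.comp_def, hrdef] using this
  have hinf0 : (⨅ k, r k) = 0 := tendsto_nhds_unique hrsub hrsub0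
  have hzconv : Tendsto z atTop (nhds zstar) := by
    rw [tendsto_iff_norm_sub_tendsto_zero]
    simpa [hinf0] using hrtend
  exact ⟨zstar, hTzstar, hzconv, fun h => h zstar hTzstar⟩
end

section
/- Let E be a finite-dimensional real inner product space and let F : E → E be (1/L)-cocoercive with at least one zero. Let 0 < γ < 2/L, λ ∈ (0,1), τ ≥ 1. Then the Lookahead-GDA iterates, given by w_k^0 = z^k, w_k^{t+1} = w_k^t − γ F w_k^t for t = 0, …, τ−1, z^{k+1} = (1 − λ)z^k + λ w_k^τ, converge to some z⋆ with F z⋆ = 0. -/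
open InnerProductSpace Filter

/-- convergence of Lookahead-GDA for a `(1/L)`-cocoercive `F`
with a zero, stepsize `0 < γ < 2/L`, `λ ∈ (0,1)` and `τ ≥ 1` inner steps:
the iterates converge to some zero of `F`. -/
theorem stmt12 {E : Type*} [NormedAddCommGroup E] [InnerProductSpace ℝ E]
    [FiniteDimensional ℝ E]
    (F : E → E) (L : ℝ) (hL : 0 < L)
    (hcoco : ∀ z z' : E, ⟪z - z', F z - F z'⟫_ℝ ≥ (1 / L) * ‖F z - F z'‖^2)
    (hzero : ∃ w, F w = 0)
    (γ lam : ℝ) (hγ0 : 0 < γ) (hγ2 : γ < 2 / L)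
    (hlam0 : 0 < lam) (hlam1 : lam < 1)
    (τ : ℕ) (hτ : 1 ≤ τ)
    (z : ℕ → E) (w : ℕ → ℕ → E)
    (hw0 : ∀ k, w k 0 = z k)
    (hw : ∀ k, ∀ t < τ, w k (t + 1) = w k t - γ • F (w k t))
    (hz : ∀ k, z (k + 1) = (1 - lam) • z k + lam • w k τ) :
    ∃ zstar : E, F zstar = 0 ∧ Tendsto z atTop (nhds zstar) := by
  obtain ⟨zs, hzs⟩ := hzero
  set c : ℝ := γ * (2 / L - γ) with hc
  have hcpos : 0 < c := mul_pos hγ0 (by linarith)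
  -- one gradient step decreases squared distance to any zero
  have hstep : ∀ p, F p = 0 → ∀ x : E,
      ‖(x - γ • F x) - p‖^2 ≤ ‖x - p‖^2 - c * ‖F x‖^2 := by
    intro p hp x
    have h1 : ⟪x - p, F x⟫_ℝ ≥ (1 / L) * ‖F x‖^2 := by
      have := hcoco x p
      rwa [hp, sub_zero] at this
    have e1 : (x - γ • F x) - p = (x - p) - γ • F x := by
      abel
    have e2 : ‖(x - p) - γ • F x‖^2
        = ‖x - p‖^2 - 2 * ⟪x - p, γ • F x⟫_ℝ + ‖γ • F x‖^2 :=
      norm_sub_sq_real _ _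
    have e3 : ⟪x - p, γ • F x⟫_ℝ = γ * ⟪x - p, F x⟫_ℝ :=
      real_inner_smul_right _ _ _
    have e4 : ‖γ • F x‖^2 = γ^2 * ‖F x‖^2 := by
      rw [norm_smul, mul_pow, Real.norm_eq_abs, sq_abs]
    rw [e1, e2, e3, e4]
    have h2 := mul_le_mul_of_nonneg_left h1 hγ0.le
    have hc2 : c * ‖F x‖^2 + γ^2 * ‖F x‖^2 = 2 * (γ * (1 / L * ‖F x‖^2)) := by
      rw [hc]; ring
    linarith [h2, hc2]
  -- inner loop decrease
  have hinner : ∀ p, F p = 0 → ∀ k, ∀ t, 1 ≤ t → t ≤ τ →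
      ‖w k t - p‖^2 ≤ ‖z k - p‖^2 - c * ‖F (z k)‖^2 := by
    intro p hp k t
    induction t with
    | zero => intro h; omega
    | succ t ih =>
      intro _ hle
      rcases Nat.eq_zero_or_pos t with h0 | h1
      · subst h0
        rw [hw k 0 (by omega), hw0]
        exact hstep p hp (z k)
      · have hlt : t < τ := by omega
        have h2 := hstep p hp (w k t)
        rw [hw k t hlt]
        have h3 := ih h1 (by omega)
        have h4 : 0 ≤ c * ‖F (w k t)‖^2 := mul_nonneg hcpos.le (sq_nonneg _)
        linarith
  -- convexity of squared norm
  have hconv : ∀ a b : E, ‖(1 - lam) • a + lam • b‖^2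
      ≤ (1 - lam) * ‖a‖^2 + lam * ‖b‖^2 := by
    intro a b
    have e : ‖(1 - lam) • a + lam • b‖^2
        = ‖(1 - lam) • a‖^2 + 2 * ⟪(1 - lam) • a, lam • b⟫_ℝ + ‖lam • b‖^2 :=
      norm_add_sq_real _ _
    rw [e]
    have e1 : ⟪(1 - lam) • a, lam • b⟫_ℝ = (1 - lam) * lam * ⟪a, b⟫_ℝ := by
      rw [real_inner_smul_left, real_inner_smul_right]; ring
    have e2 : ‖(1 - lam) • a‖^2 = (1 - lam)^2 * ‖a‖^2 := by
      rw [norm_smul, mul_pow, Real.norm_eq_abs, sq_abs]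
    have e3 : ‖lam • b‖^2 = lam^2 * ‖b‖^2 := by
      rw [norm_smul, mul_pow, Real.norm_eq_abs, sq_abs]
    rw [e1, e2, e3]
    have h1 := real_inner_le_norm a b
    nlinarith [sq_nonneg (‖a‖ - ‖b‖), mul_pos hlam0 (show (0:ℝ) < 1 - lam by linarith)]
  -- outer decrease
  have hdec : ∀ p, F p = 0 → ∀ k,
      ‖z (k+1) - p‖^2 ≤ ‖z k - p‖^2 - lam * c * ‖F (z k)‖^2 := by
    intro p hp k
    have e : z (k+1) - p = (1 - lam) • (z k - p) + lam • (w k τ - p) := by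
      rw [hz k]; module
    rw [e]
    have h1 := hconv (z k - p) (w k τ - p)
    have h2 := hinner p hp k τ hτ le_rfl
    nlinarith [mul_le_mul_of_nonneg_left h2 hlam0.le]
  -- Lipschitz continuity of F
  have hlipF : ∀ x y : E, ‖F x - F y‖ ≤ L * ‖x - y‖ := by
    intro x y
    by_cases h : F x - F y = 0
    · rw [h, norm_zero]; positivity
    · have hn : 0 < ‖F x - F y‖ := norm_pos_iff.2 h
      have key : (1 / L) * ‖F x - F y‖^2 ≤ ‖x - y‖ * ‖F x - F y‖ :=
        le_trans (hcoco x y) (real_inner_le_norm _ _)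
      have key2 := mul_le_mul_of_nonneg_left key hL.le
      rw [show L * ((1 / L) * ‖F x - F y‖^2) = (L * (1/L)) * ‖F x - F y‖^2 by ring,
        mul_one_div_cancel hL.ne', one_mul] at key2
      nlinarith [key2, hn]
  have hcont : Continuous F := by
    apply LipschitzWith.continuous (K := L.toNNReal)
    apply LipschitzWith.of_dist_le_mul
    intro x y
    simpa [dist_eq_norm, Real.coe_toNNReal L hL.le] using hlipF x y
  -- helper: antitone squared distances and their limits
  have hsq : ∀ p, F p = 0 → Antitone (fun k => ‖z k - p‖^2) := by
    intro p hp
    apply antitone_nat_of_succ_le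
    intro k
    have := hdec p hp k
    nlinarith [mul_nonneg (mul_nonneg hlam0.le hcpos.le) (sq_nonneg ‖F (z k)‖)]
  have hbdd : ∀ p : E, BddBelow (Set.range (fun k => ‖z k - p‖^2)) := by
    intro p
    exact ⟨0, by rintro x ⟨k, rfl⟩; positivity⟩
  -- ‖F (z k)‖ → 0
  have hFz : Tendsto (fun k => F (z k)) atTop (nhds 0) := by
    have ha : Tendsto (fun k => ‖z k - zs‖^2) atTop
        (nhds (⨅ k, ‖z k - zs‖^2)) :=
      tendsto_atTop_ciInf (hsq zs hzs) (hbdd zs)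
    have ha' : Tendsto (fun k => ‖z (k+1) - zs‖^2) atTop
        (nhds (⨅ k, ‖z k - zs‖^2)) :=
      ha.comp (tendsto_add_atTop_nat 1)
    have hdiff : Tendsto (fun k => ‖z k - zs‖^2 - ‖z (k+1) - zs‖^2) atTop (nhds 0) := by
      simpa using ha.sub ha'
    have hsqz : Tendsto (fun k => lam * c * ‖F (z k)‖^2) atTop (nhds 0) := by
      apply squeeze_zero (fun k => by positivity)
        (fun k => by have := hdec zs hzs k; linarith) hdiff
    have hpos : 0 < lam * c := mul_pos hlam0 hcpos
    have hsqz2 : Tendsto (fun k => ‖F (z k)‖^2) atTop (nhds 0) := by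
      have h := hsqz.const_mul (1 / (lam * c))
      rw [mul_zero] at h
      refine h.congr (fun k => ?_)
      rw [one_div, inv_mul_cancel_left₀ hpos.ne']
    have hnorm : Tendsto (fun k => ‖F (z k)‖) atTop (nhds 0) := by
      have h : Tendsto (fun k => Real.sqrt (‖F (z k)‖^2)) atTop (nhds (Real.sqrt 0)) :=
        (Real.continuous_sqrt.tendsto 0).comp hsqz2
      rw [Real.sqrt_zero] at h
      exact h.congr (fun k => Real.sqrt_sq (norm_nonneg _))
    exact tendsto_zero_iff_norm_tendsto_zero.2 hnorm
  -- bounded iterates, extract convergent subsequence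
  have hmem : ∀ k, z k ∈ Metric.closedBall zs (‖z 0 - zs‖) := by
    intro k
    have h1 : ‖z k - zs‖^2 ≤ ‖z 0 - zs‖^2 := hsq zs hzs (Nat.zero_le k)
    have h2 : ‖z k - zs‖ = Real.sqrt (‖z k - zs‖^2) := (Real.sqrt_sq (norm_nonneg _)).symm
    have h3 : ‖z 0 - zs‖ = Real.sqrt (‖z 0 - zs‖^2) := (Real.sqrt_sq (norm_nonneg _)).symm
    rw [Metric.mem_closedBall, dist_eq_norm, h2, h3]
    exact Real.sqrt_le_sqrt h1
  obtain ⟨zhat, -, φ, hφ, hzφ⟩ :=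
    tendsto_subseq_of_bounded Metric.isBounded_closedBall hmem
  -- zhat is a zero of F
  have hFzhat : F zhat = 0 := by
    have h1 : Tendsto (fun j => F (z (φ j))) atTop (nhds (F zhat)) :=
      (hcont.tendsto zhat).comp hzφ
    have h2 : Tendsto (fun j => F (z (φ j))) atTop (nhds 0) :=
      hFz.comp hφ.tendsto_atTop
    exact tendsto_nhds_unique h1 h2
  -- conclude convergence of the whole sequence to zhat
  refine ⟨zhat, hFzhat, ?_⟩
  have hb : Tendsto (fun k => ‖z k - zhat‖^2) atTop
      (nhds (⨅ k, ‖z k - zhat‖^2)) :=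
    tendsto_atTop_ciInf (hsq zhat hFzhat) (hbdd zhat)
  have hbsub : Tendsto (fun j => ‖z (φ j) - zhat‖^2) atTop
      (nhds (⨅ k, ‖z k - zhat‖^2)) :=
    hb.comp hφ.tendsto_atTop
  have hbsub0 : Tendsto (fun j => ‖z (φ j) - zhat‖^2) atTop (nhds 0) := by
    have h1 : Tendsto (fun j => z (φ j) - zhat) atTop (nhds (zhat - zhat)) :=
      hzφ.sub (tendsto_const_nhds : Tendsto (fun _ : ℕ => zhat) atTop (nhds zhat))
    rw [sub_self] at h1
    have h2 := (h1.norm).pow 2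
    simpa using h2
  have hinf0 : (⨅ k, ‖z k - zhat‖^2) = 0 := tendsto_nhds_unique hbsub hbsub0
  rw [hinf0] at hb
  have hnorm : Tendsto (fun k => ‖z k - zhat‖) atTop (nhds 0) := by
    have h : Tendsto (fun k => Real.sqrt (‖z k - zhat‖^2)) atTop (nhds (Real.sqrt 0)) :=
      (Real.continuous_sqrt.tendsto 0).comp hb
    rw [Real.sqrt_zero] at h
    exact h.congr (fun k => Real.sqrt_sq (norm_nonneg _))
  rw [tendsto_iff_dist_tendsto_zero]
  simpa [dist_eq_norm] using hnorm
end

section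
/- Let C ⊆ E be nonempty and convex, let P : E → E satisfy P z ∈ C and ⟨z − P z, c − P z⟩ ≤ 0 for all z ∈ E and c ∈ C (metric projection onto C). Let F : E → E be monotone and L-Lipschitz, let 0 < γ ≤ 1/L, set H := id − γF, and define the forward-backward-forward operator FBF(z) := z − (H z − H z̄) with z̄ := P(H z). Let z⋆ ∈ C satisfy ⟨F z⋆, c − z⋆⟩ ≥ 0 for all c ∈ C. Then for every z ∈ E: ‖FBF(z) − z⋆‖² ≤ ‖z − z⋆‖² − (1 − γ²L²)‖z̄ − z‖². In particular FBF is quasi-nonexpansive; moreover, if γ < 1/L, then FBF(z) = z if and only if z ∈ C and ⟨F z, c − z⟩ ≥ 0 for all c ∈ C (i.e. the fixed points of FBF are exactly the zeros of F + N_C). -/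
open InnerProductSpace

/-- quasi-nonexpansiveness and fixed points of the
forward-backward-forward operator `FBF(z) = z − (H z − H z̄)` with
`z̄ = P(H z)`, `H = id − γF`, for a monotone `L`-Lipschitz `F`, projection `P`
onto a nonempty convex set `C`, `0 < γ ≤ 1/L` and a solution `z⋆`:
`‖FBF(z) − z⋆‖² ≤ ‖z − z⋆‖² − (1 − γ²L²)‖z̄ − z‖²`; moreover, if `γ < 1/L`,
the fixed points of FBF are exactly the zeros of `F + N_C`. -/
theorem stmt13 {E : Type*} [NormedAddCommGroup E] [InnerProductSpace ℝ E]
    (C : Set E) (hCne : C.Nonempty) (hCconv : Convex ℝ C)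
    (P : E → E) (hPmem : ∀ z, P z ∈ C)
    (hPproj : ∀ z : E, ∀ c ∈ C, ⟪z - P z, c - P z⟫_ℝ ≤ 0)
    (F : E → E) (L : ℝ) (hL : 0 < L)
    (hmono : ∀ z z' : E, ⟪F z - F z', z - z'⟫_ℝ ≥ 0)
    (hF : ∀ z z' : E, ‖F z - F z'‖ ≤ L * ‖z - z'‖)
    (γ : ℝ) (hγ0 : 0 < γ) (hγL : γ ≤ 1 / L)
    (H FBF : E → E) (hH : ∀ z, H z = z - γ • F z)
    (hFBF : ∀ z, FBF z = z - (H z - H (P (H z))))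
    (zstar : E) (hzC : zstar ∈ C)
    (hzstar : ∀ c ∈ C, ⟪F zstar, c - zstar⟫_ℝ ≥ 0) :
    (∀ z : E, ‖FBF z - zstar‖^2 ≤
      ‖z - zstar‖^2 - (1 - γ^2 * L^2) * ‖P (H z) - z‖^2) ∧
    (γ < 1 / L → ∀ z : E,
      (FBF z = z ↔ z ∈ C ∧ ∀ c ∈ C, ⟪F z, c - z⟫_ℝ ≥ 0)) := by
  constructor
  · intro z
    set zb := P (H z) with hzb
    have hwz : FBF z - zstar = (zb - zstar) + γ • (F z - F zb) := by
      rw [hFBF z, ← hzb, hH z, hH zb, smul_sub]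
      abel
    have eq1 : ‖FBF z - zstar‖^2 = ‖zb - zstar‖^2
        + 2 * (γ * ⟪zb - zstar, F z - F zb⟫_ℝ)
        + γ^2 * ‖F z - F zb‖^2 := by
      rw [hwz, norm_add_sq_real, real_inner_smul_right,
        norm_smul, mul_pow, Real.norm_eq_abs, sq_abs]
    have ecomm : ⟪zb - zstar, F z - F zb⟫_ℝ
        = ⟪F z, zb - zstar⟫_ℝ - ⟪F zb, zb - zstar⟫_ℝ := by
      rw [real_inner_comm, inner_sub_left]
    have eq2 : ‖z - zstar‖^2
        = ‖z - zb‖^2 + 2 * ⟪z - zb, zb - zstar⟫_ℝ + ‖zb - zstar‖^2 := by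
      have h : z - zstar = (z - zb) + (zb - zstar) := by abel
      rw [h, norm_add_sq_real]
    have hproj2 : γ * ⟪F z, zb - zstar⟫_ℝ ≤ ⟪z - zb, zb - zstar⟫_ℝ := by
      have h := hPproj (H z) zstar hzC
      rw [← hzb, hH z] at h
      have e : z - γ • F z - zb = (z - zb) - γ • F z := by abel
      rw [e, inner_sub_left, real_inner_smul_left,
        show zstar - zb = -(zb - zstar) by abel,
        inner_neg_right, inner_neg_right] at h
      nlinarith [h]
    have hmem : zb ∈ C := hPmem (H z)
    have hq : 0 ≤ ⟪F zb, zb - zstar⟫_ℝ := by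
      have h1 := hmono zb zstar
      have h2 := hzstar zb hmem
      rw [inner_sub_left] at h1
      linarith
    have hγq : 0 ≤ γ * ⟪F zb, zb - zstar⟫_ℝ := mul_nonneg hγ0.le hq
    have hlip2 : ‖F z - F zb‖^2 ≤ L^2 * ‖z - zb‖^2 := by
      nlinarith [hF z zb, norm_nonneg (F z - F zb), norm_nonneg (z - zb)]
    have hlip3 : γ^2 * ‖F z - F zb‖^2 ≤ γ^2 * (L^2 * ‖z - zb‖^2) :=
      mul_le_mul_of_nonneg_left hlip2 (sq_nonneg γ)
    have hrev2 : ‖zb - z‖^2 = ‖z - zb‖^2 := by rw [norm_sub_rev]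
    rw [hrev2]
    nlinarith [eq1, ecomm, eq2, hproj2, hγq, hlip3, hγ0]
  · intro hγ z
    set zb := P (H z) with hzb
    have hmem : zb ∈ C := hPmem (H z)
    constructor
    · intro hfix
      have h0 := hFBF z
      rw [hfix, ← hzb] at h0
      have h1 : H z - H zb = 0 := sub_eq_self.mp h0.symm
      rw [hH z, hH zb] at h1
      have hd : z - zb = γ • (F z - F zb) := by
        have h2 : z - zb - (γ • F z - γ • F zb) = 0 := by
          rw [show z - zb - (γ • F z - γ • F zb)
              = z - γ • F z - (zb - γ • F zb) from by abel, h1]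
        rw [smul_sub]
        exact sub_eq_zero.mp h2
      have hn : ‖z - zb‖ = γ * ‖F z - F zb‖ := by
        rw [hd, norm_smul, Real.norm_eq_abs, abs_of_pos hγ0]
      have hL2 : γ * L < 1 := (lt_div_iff₀ hL).mp hγ
      have hz0 : ‖z - zb‖ ≤ 0 := by
        nlinarith [hn, mul_le_mul_of_nonneg_left (hF z zb) hγ0.le, hL2,
          norm_nonneg (z - zb)]
      have hzeq : z = zb :=
        sub_eq_zero.mp (norm_eq_zero.mp (le_antisymm hz0 (norm_nonneg _)))
      refine ⟨hzeq ▸ hmem, fun c hc => ?_⟩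
      have hp := hPproj (H z) c hc
      rw [← hzb, ← hzeq, hH z] at hp
      rw [show z - γ • F z - z = -(γ • F z) from by abel,
        inner_neg_left, real_inner_smul_left] at hp
      nlinarith [hp]
    · rintro ⟨hzC', hsol⟩
      have hp := hPproj (H z) z hzC'
      rw [← hzb, hH z] at hp
      rw [show z - γ • F z - zb = (z - zb) - γ • F z from by abel,
        inner_sub_left, real_inner_smul_left] at hp
      have hs := hsol zb hmem
      have hflip : ⟪F z, z - zb⟫_ℝ = -⟪F z, zb - z⟫_ℝ := by
        rw [← inner_neg_right, neg_sub]
      have hγs : 0 ≤ γ * ⟪F z, zb - z⟫_ℝ := mul_nonneg hγ0.le hs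
      have hnn : ⟪z - zb, z - zb⟫_ℝ ≤ 0 := by
        rw [hflip] at hp
        linarith
      have hv : z - zb = 0 := real_inner_self_nonpos.mp hnn
      have hzeq : z = zb := sub_eq_zero.mp hv
      rw [hFBF z, ← hzb, ← hzeq, sub_self, sub_zero]
end

section
/- Let C ⊆ E be nonempty and convex, let P : E → E satisfy P z ∈ C and ⟨z − P z, c − P z⟩ ≤ 0 for all z ∈ E and c ∈ C (metric projection onto C). Let F : E → E be L-Lipschitz, suppose the set-valued operator S := F + N_C is ρ-comonotone, and let z⋆ ∈ C with −F z⋆ ∈ N_C(z⋆). Let γ satisfy max{0, −2ρ} < γ ≤ 1/L, set H := id − γF, and let α > 0. Consider the CEG+ iteration: z̄^k = P(H z^k), z^{k+1} = z^k − α(H z^k − H z̄^k). Then for every k: ‖z^{k+1} − z⋆‖² ≤ ‖z^k − z⋆‖² − α(1 + 2ρ/γ − α)‖H z̄^k − H z^k‖² − α(1 − γ²L²)‖z̄^k − z^k‖². In particular the CEG+ operator z ↦ z − α(H z − H(P(H z))) is quasi-nonexpansive whenever α ∈ (0, 1 + 2ρ/γ). -/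
/-!
Write `w̄ = P(H w)` and `g = H w − H w̄` for the CEG+ direction. The projection inequality says
that `γ⁻¹(H w − w̄)` lies in the normal cone at `w̄`, so `γ⁻¹ g = F w̄ + γ⁻¹(H w − w̄) ∈ S w̄`;
comonotonicity against `0 ∈ S z⋆` gives `⟪g, w̄ − z⋆⟫ ≥ (ρ/γ)‖g‖²`. Since
`g − (w − w̄) = −γ(F w − F w̄)` has norm at most `γL‖w − w̄‖`, expanding the square gives
`2⟪g, w − w̄⟫ ≥ ‖g‖² + (1 − γ²L²)‖w − w̄‖²`. Adding the two bounds controls `⟪g, w − z⋆⟫`,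
which is the cross term of `‖w − αg − z⋆‖²`.
-/

open InnerProductSpace

section CEGPlus

variable {E : Type*} [NormedAddCommGroup E] [InnerProductSpace ℝ E]

lemma norm_sq_add_le_two_inner_of_norm_sub_le {g d : E} {K : ℝ} (h : ‖g - d‖ ≤ K * ‖d‖) :
    ‖g‖ ^ 2 + (1 - K ^ 2) * ‖d‖ ^ 2 ≤ 2 * ⟪g, d⟫_ℝ := by
  have hsq := pow_le_pow_left₀ (norm_nonneg _) h 2
  rw [norm_sub_sq_real, mul_pow] at hsq
  linarith

lemma div_mul_norm_sq_le_inner_of_inv_smul {g x : E} {ρ γ : ℝ} (hγ : 0 < γ)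
    (h : ρ * ‖γ⁻¹ • g‖ ^ 2 ≤ ⟪γ⁻¹ • g, x⟫_ℝ) : ρ / γ * ‖g‖ ^ 2 ≤ ⟪g, x⟫_ℝ := by
  rw [norm_smul, real_inner_smul_left, Real.norm_eq_abs, abs_of_pos (inv_pos.mpr hγ)] at h
  have hγh := mul_le_mul_of_nonneg_left h hγ.le
  field_simp at hγh ⊢
  linarith

lemma norm_sub_smul_sub_sq_le {w w' z g : E} {a b α : ℝ} (hα : 0 ≤ α)
    (hcomon : a * ‖g‖ ^ 2 ≤ ⟪g, w' - z⟫_ℝ)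
    (hlip : ‖g‖ ^ 2 + b * ‖w - w'‖ ^ 2 ≤ 2 * ⟪g, w - w'⟫_ℝ) :
    ‖w - α • g - z‖ ^ 2
      ≤ ‖w - z‖ ^ 2 - α * (1 + 2 * a - α) * ‖g‖ ^ 2 - α * b * ‖w' - w‖ ^ 2 := by
  have hsplit : ⟪g, w - z⟫_ℝ = ⟪g, w - w'⟫_ℝ + ⟪g, w' - z⟫_ℝ := by
    rw [← inner_add_right, sub_add_sub_cancel]
  have hexpand : ‖w - α • g - z‖ ^ 2 = ‖w - z‖ ^ 2 - 2 * α * ⟪g, w - z⟫_ℝ + α ^ 2 * ‖g‖ ^ 2 := by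
    rw [sub_right_comm, norm_sub_sq_real, real_inner_smul_right, real_inner_comm, norm_smul,
      mul_pow, Real.norm_eq_abs, sq_abs]
    ring
  rw [hexpand, hsplit, norm_sub_rev w']
  nlinarith [mul_le_mul_of_nonneg_left hcomon hα, mul_le_mul_of_nonneg_left hlip hα]

lemma inv_smul_sub_mem_of_proj (C : Set E) (P : E → E) (hPmem : ∀ z, P z ∈ C)
    (hPproj : ∀ z : E, ∀ c ∈ C, ⟪z - P z, c - P z⟫_ℝ ≤ 0) (F : E → E) (S : E → Set E)
    (hSdef : ∀ zz : E, S zz =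
      {v | zz ∈ C ∧ ∃ u, (∀ c ∈ C, ⟪u, c - zz⟫_ℝ ≤ 0) ∧ v = F zz + u})
    {γ : ℝ} (hγ : 0 < γ) (H : E → E) (hH : ∀ zz, H zz = zz - γ • F zz) (x : E) :
    γ⁻¹ • (x - H (P x)) ∈ S (P x) := by
  rw [hSdef]
  refine ⟨hPmem x, γ⁻¹ • (x - P x), fun c hc => ?_, ?_⟩
  · rw [real_inner_smul_left]
    exact mul_nonpos_of_nonneg_of_nonpos (inv_nonneg.mpr hγ.le) (hPproj x c hc)
  · rw [hH, sub_sub_eq_add_sub, add_sub_right_comm, smul_add, smul_smul, inv_mul_cancel₀ hγ.ne',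
      one_smul, add_comm]

lemma ceg_plus_step_descent (C : Set E) (P : E → E) (hPmem : ∀ z, P z ∈ C)
    (hPproj : ∀ z : E, ∀ c ∈ C, ⟪z - P z, c - P z⟫_ℝ ≤ 0)
    (F : E → E) {L ρ γ α : ℝ} (hF : ∀ z z' : E, ‖F z - F z'‖ ≤ L * ‖z - z'‖)
    (S : E → Set E)
    (hSdef : ∀ zz : E, S zz =
      {v | zz ∈ C ∧ ∃ u, (∀ c ∈ C, ⟪u, c - zz⟫_ℝ ≤ 0) ∧ v = F zz + u})
    (hS : ∀ z z' v v' : E, v ∈ S z → v' ∈ S z' → ⟪v - v', z - z'⟫_ℝ ≥ ρ * ‖v - v'‖ ^ 2)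
    {zstar : E} (hzC : zstar ∈ C) (hzstar : ∀ c ∈ C, ⟪-F zstar, c - zstar⟫_ℝ ≤ 0)
    (hγ : 0 < γ) (hα : 0 ≤ α) (H : E → E) (hH : ∀ zz, H zz = zz - γ • F zz) (w : E) :
    ‖w - α • (H w - H (P (H w))) - zstar‖ ^ 2 ≤ ‖w - zstar‖ ^ 2
      - α * (1 + 2 * ρ / γ - α) * ‖H (P (H w)) - H w‖ ^ 2
      - α * (1 - γ ^ 2 * L ^ 2) * ‖P (H w) - w‖ ^ 2 := by
  set w' := P (H w)
  have hsol : (0 : E) ∈ S zstar := by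
    rw [hSdef]
    exact ⟨hzC, -F zstar, hzstar, by simp⟩
  have hcomon : ρ / γ * ‖H w - H w'‖ ^ 2 ≤ ⟪H w - H w', w' - zstar⟫_ℝ := by
    have := hS _ _ _ _ (inv_smul_sub_mem_of_proj C P hPmem hPproj F S hSdef hγ H hH (H w)) hsol
    rw [sub_zero] at this
    exact div_mul_norm_sq_le_inner_of_inv_smul hγ this
  have hlip : ‖(H w - H w') - (w - w')‖ ≤ (γ * L) * ‖w - w'‖ := by
    have hdiff : (H w - H w') - (w - w') = -(γ • (F w - F w')) := by
      rw [hH, hH]; module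
    rw [hdiff, norm_neg, norm_smul, Real.norm_eq_abs, abs_of_pos hγ, mul_assoc]
    exact mul_le_mul_of_nonneg_left (hF w w') hγ.le
  rw [norm_sub_rev (H w'), mul_div_assoc]
  have := norm_sub_smul_sub_sq_le hα hcomon (norm_sq_add_le_two_inner_of_norm_sub_le hlip)
  rwa [mul_pow] at this

end CEGPlus

theorem stmt14_general {E : Type*} [NormedAddCommGroup E] [InnerProductSpace ℝ E]
    (C : Set E)
    (P : E → E) (hPmem : ∀ z, P z ∈ C)
    (hPproj : ∀ z : E, ∀ c ∈ C, ⟪z - P z, c - P z⟫_ℝ ≤ 0)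
    (F : E → E) (L ρ γ α : ℝ) (hL : 0 < L)
    (hF : ∀ z z' : E, ‖F z - F z'‖ ≤ L * ‖z - z'‖)
    (S : E → Set E)
    (hSdef : ∀ zz : E, S zz =
      {v | zz ∈ C ∧ ∃ u, (∀ c ∈ C, ⟪u, c - zz⟫_ℝ ≤ 0) ∧ v = F zz + u})
    (hS : ∀ z z' v v' : E, v ∈ S z → v' ∈ S z' →
      ⟪v - v', z - z'⟫_ℝ ≥ ρ * ‖v - v'‖^2)
    (zstar : E) (hzC : zstar ∈ C)
    (hzstar : ∀ c ∈ C, ⟪-F zstar, c - zstar⟫_ℝ ≤ 0)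
    (hγ : max 0 (-(2 * ρ)) < γ) (hγL : γ ≤ 1 / L) (hα : 0 < α)
    (H : E → E) (hH : ∀ zz, H zz = zz - γ • F zz)
    (z zbar : ℕ → E)
    (hzbar : ∀ k, zbar k = P (H (z k)))
    (hz : ∀ k, z (k + 1) = z k - α • (H (z k) - H (zbar k))) :
    (∀ k : ℕ, ‖z (k + 1) - zstar‖^2 ≤ ‖z k - zstar‖^2
        - α * (1 + 2 * ρ / γ - α) * ‖H (zbar k) - H (z k)‖^2
        - α * (1 - γ^2 * L^2) * ‖zbar k - z k‖^2) ∧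
    (α < 1 + 2 * ρ / γ → ∀ w : E,
      ‖(w - α • (H w - H (P (H w)))) - zstar‖ ≤ ‖w - zstar‖) := by
  have hγ0 : 0 < γ := (le_max_left _ _).trans_lt hγ
  have descent := ceg_plus_step_descent C P hPmem hPproj F hF S hSdef hS hzC hzstar hγ0 hα.le H hH
  refine ⟨fun k => by rw [hz k, hzbar k]; exact descent (z k), fun hαlt w => ?_⟩
  have hγL2 : γ ^ 2 * L ^ 2 ≤ 1 := by
    rw [← mul_pow]
    exact pow_le_one₀ (by positivity) ((le_div_iff₀ hL).mp hγL)
  have hsq : ‖w - α • (H w - H (P (H w))) - zstar‖ ^ 2 ≤ ‖w - zstar‖ ^ 2 := by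
    linarith [descent w,
      mul_nonneg (mul_nonneg hα.le (sub_nonneg.mpr hαlt.le)) (sq_nonneg ‖H (P (H w)) - H w‖),
      mul_nonneg (mul_nonneg hα.le (sub_nonneg.mpr hγL2)) (sq_nonneg ‖P (H w) - w‖)]
  exact pow_le_pow_iff_left₀ (norm_nonneg _) (norm_nonneg _) two_ne_zero |>.mp hsq

/-- descent inequality for the constrained CEG+ iteration
`z̄^k = P(H z^k)`, `z^{k+1} = z^k − α(H z^k − H z̄^k)` with `H = id − γF`,
when `S = F + N_C` is `ρ`-comonotone, `max{0, −2ρ} < γ ≤ 1/L`, `α > 0`: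
`‖z^{k+1} − z⋆‖² ≤ ‖z^k − z⋆‖² − α(1 + 2ρ/γ − α)‖H z̄^k − H z^k‖²
  − α(1 − γ²L²)‖z̄^k − z^k‖²`.
In particular the CEG+ operator is quasi-nonexpansive (with respect to the
solution `z⋆`) whenever `α ∈ (0, 1 + 2ρ/γ)`. -/
theorem stmt14 {E : Type*} [NormedAddCommGroup E] [InnerProductSpace ℝ E]
    (C : Set E) (hCne : C.Nonempty) (hCconv : Convex ℝ C)
    (P : E → E) (hPmem : ∀ z, P z ∈ C)
    (hPproj : ∀ z : E, ∀ c ∈ C, ⟪z - P z, c - P z⟫_ℝ ≤ 0)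
    (F : E → E) (L ρ γ α : ℝ) (hL : 0 < L)
    (hF : ∀ z z' : E, ‖F z - F z'‖ ≤ L * ‖z - z'‖)
    (S : E → Set E)
    (hSdef : ∀ zz : E, S zz =
      {v | zz ∈ C ∧ ∃ u, (∀ c ∈ C, ⟪u, c - zz⟫_ℝ ≤ 0) ∧ v = F zz + u})
    (hS : ∀ z z' v v' : E, v ∈ S z → v' ∈ S z' →
      ⟪v - v', z - z'⟫_ℝ ≥ ρ * ‖v - v'‖^2)
    (zstar : E) (hzC : zstar ∈ C)
    (hzstar : ∀ c ∈ C, ⟪-F zstar, c - zstar⟫_ℝ ≤ 0)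
    (hγ : max 0 (-(2 * ρ)) < γ) (hγL : γ ≤ 1 / L) (hα : 0 < α)
    (H : E → E) (hH : ∀ zz, H zz = zz - γ • F zz)
    (z zbar : ℕ → E)
    (hzbar : ∀ k, zbar k = P (H (z k)))
    (hz : ∀ k, z (k + 1) = z k - α • (H (z k) - H (zbar k))) :
    (∀ k : ℕ, ‖z (k + 1) - zstar‖^2 ≤ ‖z k - zstar‖^2
        - α * (1 + 2 * ρ / γ - α) * ‖H (zbar k) - H (z k)‖^2
        - α * (1 - γ^2 * L^2) * ‖zbar k - z k‖^2) ∧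
    (α < 1 + 2 * ρ / γ → ∀ w : E,
      ‖(w - α • (H w - H (P (H w)))) - zstar‖ ≤ ‖w - zstar‖) :=
  stmt14_general C P hPmem hPproj F L ρ γ α hL hF S hSdef hS zstar hzC hzstar hγ hγL hα H hH z zbar
    hzbar hz
end

section
/- Let C ⊆ E be nonempty and convex, let P : E → E satisfy P z ∈ C and ⟨z − P z, c − P z⟩ ≤ 0 for all z ∈ E and c ∈ C (metric projection onto C). Let F : E → E be L-Lipschitz, suppose S := F + N_C is ρ-comonotone, and let z⋆ ∈ C with −F z⋆ ∈ N_C(z⋆). Let γ satisfy max{0, −2ρ} < γ < 1/L, set H := id − γF, and let α ∈ (0, 1] with α < 1 + 2ρ/γ. Consider the CEG+ iteration: z̄^k = P(H z^k), z^{k+1} = z^k − α(H z^k − H z̄^k). Then for every K ≥ 1: (1/K) Σ_{k=0}^{K−1} ‖z^k − z̄^k‖² ≤ ‖z^0 − z⋆‖² / (α(1 − γ²L²)K). -/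
open InnerProductSpace

set_option maxHeartbeats 1600000 in
/-- average rate of the constrained CEG+ iteration on the
residual `‖z^k − z̄^k‖²`: with `max{0, −2ρ} < γ < 1/L`, `α ∈ (0,1]`,
`α < 1 + 2ρ/γ`, for every `K ≥ 1`:
`(1/K) Σ_{k<K} ‖z^k − z̄^k‖² ≤ ‖z^0 − z⋆‖²/(α(1 − γ²L²)K)`. -/
theorem stmt15 {E : Type*} [NormedAddCommGroup E] [InnerProductSpace ℝ E]
    (C : Set E) (hCne : C.Nonempty) (hCconv : Convex ℝ C)
    (P : E → E) (hPmem : ∀ z, P z ∈ C)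
    (hPproj : ∀ z : E, ∀ c ∈ C, ⟪z - P z, c - P z⟫_ℝ ≤ 0)
    (F : E → E) (L ρ γ α : ℝ) (hL : 0 < L)
    (hF : ∀ z z' : E, ‖F z - F z'‖ ≤ L * ‖z - z'‖)
    (S : E → Set E)
    (hSdef : ∀ zz : E, S zz =
      {v | zz ∈ C ∧ ∃ u, (∀ c ∈ C, ⟪u, c - zz⟫_ℝ ≤ 0) ∧ v = F zz + u})
    (hS : ∀ z z' v v' : E, v ∈ S z → v' ∈ S z' →
      ⟪v - v', z - z'⟫_ℝ ≥ ρ * ‖v - v'‖^2)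
    (zstar : E) (hzC : zstar ∈ C)
    (hzstar : ∀ c ∈ C, ⟪-F zstar, c - zstar⟫_ℝ ≤ 0)
    (hγ : max 0 (-(2 * ρ)) < γ) (hγL : γ < 1 / L)
    (hα0 : 0 < α) (hα1 : α ≤ 1) (hαρ : α < 1 + 2 * ρ / γ)
    (H : E → E) (hH : ∀ zz, H zz = zz - γ • F zz)
    (z zbar : ℕ → E)
    (hzbar : ∀ k, zbar k = P (H (z k)))
    (hz : ∀ k, z (k + 1) = z k - α • (H (z k) - H (zbar k))) :
    ∀ K : ℕ, 1 ≤ K →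
      (1 / (K : ℝ)) * ∑ k ∈ Finset.range K, ‖z k - zbar k‖^2 ≤
        ‖z 0 - zstar‖^2 / (α * (1 - γ^2 * L^2) * K) := by

  have hγ0 : 0 < γ := lt_of_le_of_lt (le_max_left _ _) hγ
  have hργ : -(2 * ρ) < γ := lt_of_le_of_lt (le_max_right _ _) hγ
  have hγL1 : γ * L < 1 := by
    have := (lt_div_iff₀ hL).mp hγL
    linarith
  have hd : 0 < 1 - γ ^ 2 * L ^ 2 := by nlinarith [mul_pos hγ0 hL]
  have hαργ : α * γ < γ + 2 * ρ := by
    have h := mul_lt_mul_of_pos_right hαρ hγ0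
    have h2 : (1 + 2 * ρ / γ) * γ = γ + 2 * ρ := by field_simp
    linarith [h2 ▸ h]
  have h0S : (0 : E) ∈ S zstar := by
    rw [hSdef]
    exact ⟨hzC, -F zstar, hzstar, by simp⟩
  have key : ∀ k, ‖z (k + 1) - zstar‖ ^ 2
      + α * (1 - γ ^ 2 * L ^ 2) * ‖z k - zbar k‖ ^ 2 ≤ ‖z k - zstar‖ ^ 2 := by
    intro k
    set a := z k with ha
    set b := zbar k with hb
    have hbC : b ∈ C := by rw [hb, hzbar]; exact hPmem _
    set v : E := F b + γ⁻¹ • (H a - b) with hv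
    have hvS : v ∈ S b := by
      rw [hSdef]
      refine ⟨hbC, γ⁻¹ • (H a - b), fun c hc => ?_, rfl⟩
      have hp : ⟪H a - b, c - b⟫_ℝ ≤ 0 := by
        have := hPproj (H a) c hc
        rwa [← hzbar k] at this
      rw [real_inner_smul_left]
      exact mul_nonpos_of_nonneg_of_nonpos (inv_nonneg.mpr hγ0.le) hp
    have hcomon := hS b zstar v 0 hvS h0S
    simp only [sub_zero] at hcomon
    set g : E := H a - H b with hg
    have hgv : g = γ • v := by
      rw [hg, hv, hH, hH, smul_add, smul_smul, mul_inv_cancel₀ hγ0.ne', one_smul]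
      try abel
    have hzn : z (k + 1) = a - α • g := by rw [hz k]
    have hGv : ‖g‖ ^ 2 = γ ^ 2 * ‖v‖ ^ 2 := by
      rw [hgv, norm_smul, mul_pow, Real.norm_eq_abs, sq_abs]
    have hI2 : γ * ⟪g, b - zstar⟫_ℝ ≥ ρ * ‖g‖ ^ 2 := by
      rw [hgv, real_inner_smul_left, norm_smul, mul_pow, Real.norm_eq_abs, sq_abs]
      nlinarith [mul_le_mul_of_nonneg_left hcomon (sq_nonneg γ)]
    have habg : a - b - g = γ • (F a - F b) := by
      rw [hg, hH, hH, smul_sub]; abel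
    have hFab : ‖γ • (F a - F b)‖ ^ 2 ≤ γ ^ 2 * L ^ 2 * ‖a - b‖ ^ 2 := by
      rw [norm_smul, mul_pow, Real.norm_eq_abs, sq_abs]
      have h2 : ‖F a - F b‖ ^ 2 ≤ (L * ‖a - b‖) ^ 2 :=
        pow_le_pow_left₀ (norm_nonneg _) (hF a b) 2
      nlinarith [sq_nonneg γ]
    have hI1 : 2 * ⟪g, a - b⟫_ℝ ≥ (1 - γ ^ 2 * L ^ 2) * ‖a - b‖ ^ 2 + ‖g‖ ^ 2 := by
      have he : ‖a - b - g‖ ^ 2 = ‖a - b‖ ^ 2 - 2 * ⟪a - b, g⟫_ℝ + ‖g‖ ^ 2 := by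
        rw [@norm_sub_sq_real]
      rw [habg] at he
      rw [real_inner_comm]
      nlinarith [hFab]
    have hsplit : ⟪g, a - zstar⟫_ℝ = ⟪g, a - b⟫_ℝ + ⟪g, b - zstar⟫_ℝ := by
      rw [← inner_add_right]
      congr 1
      abel
    have hexp : ‖z (k + 1) - zstar‖ ^ 2
        = ‖a - zstar‖ ^ 2 - 2 * α * ⟪g, a - zstar⟫_ℝ + α ^ 2 * ‖g‖ ^ 2 := by
      rw [hzn]
      have h3 : a - α • g - zstar = (a - zstar) - α • g := by abel
      rw [h3, @norm_sub_sq_real, real_inner_smul_right, norm_smul,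
        Real.norm_eq_abs, mul_pow, sq_abs, real_inner_comm]
      ring
    have hg2 : (0:ℝ) ≤ ‖g‖ ^ 2 := sq_nonneg _
    have hstep : 2 * ⟪g, b - zstar⟫_ℝ ≥ (α - 1) * ‖g‖ ^ 2 := by
      have hh : 0 ≤ (γ + 2 * ρ - α * γ) * ‖g‖ ^ 2 :=
        mul_nonneg (by linarith) hg2
      have ht : 0 ≤ γ * (2 * ⟪g, b - zstar⟫_ℝ - (α - 1) * ‖g‖ ^ 2) := by
        nlinarith [hI2, hh]
      nlinarith [ht, hγ0]
    have p1 := mul_le_mul_of_nonneg_left hI1 hα0.le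
    have p2 := mul_le_mul_of_nonneg_left hstep hα0.le
    rw [hexp, hsplit]
    linarith only [p1, p2]
  have hsum : ∀ K : ℕ, α * (1 - γ ^ 2 * L ^ 2) * ∑ k ∈ Finset.range K, ‖z k - zbar k‖ ^ 2
      + ‖z K - zstar‖ ^ 2 ≤ ‖z 0 - zstar‖ ^ 2 := by
    intro K
    induction K with
    | zero => simp
    | succ n ih =>
      rw [Finset.sum_range_succ, mul_add]
      have := key n
      linarith
  intro K hK
  have hKpos : (0 : ℝ) < K := by exact_mod_cast hK
  have hc : 0 < α * (1 - γ ^ 2 * L ^ 2) * K := by positivity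
  rw [le_div_iff₀ hc]
  have hS' := hsum K
  have hnn : (0:ℝ) ≤ ‖z K - zstar‖ ^ 2 := sq_nonneg _
  have heq : 1 / (K : ℝ) * (∑ k ∈ Finset.range K, ‖z k - zbar k‖ ^ 2)
      * (α * (1 - γ ^ 2 * L ^ 2) * K)
      = α * (1 - γ ^ 2 * L ^ 2) * ∑ k ∈ Finset.range K, ‖z k - zbar k‖ ^ 2 := by
    field_simp
  rw [heq]
  linarith
end

section
/- Let E be a finite-dimensional real inner product space, let F : E → E be L-Lipschitz and ρ-comonotone with at least one zero. Let γ satisfy max{0, −2ρ} < γ < 1/L, let α ∈ (0, 1 + 2ρ/γ), λ ∈ (0,1), and τ ≥ 1. Define the EG+ operator T(w) := w − αγ F(w − γ F w). Then the Lookahead-CEG+ iterates z^{k+1} = (1 − λ)z^k + λ T^τ(z^k) converge to some z⋆ with F z⋆ = 0. -/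
open InnerProductSpace Filter

theorem key_step_aux17 {E : Type*} [NormedAddCommGroup E] [InnerProductSpace ℝ E]
    (F : E → E) (L ρ γ α : ℝ)
    (hF : ∀ z z' : E, ‖F z - F z'‖ ≤ L * ‖z - z'‖)
    (hρ : ∀ z z' : E, ⟪F z - F z', z - z'⟫_ℝ ≥ ρ * ‖F z - F z'‖^2)
    (hγ0 : 0 < γ) (hα0 : 0 < α) (hstep : α * γ ≤ 2*ρ + γ)
    (zstar : E) (hzs : F zstar = 0) (w : E) :
    ‖(w - (α*γ) • F (w - γ • F w)) - zstar‖^2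
      ≤ ‖w - zstar‖^2 - (α * γ^2 * (1 - (L*γ)^2)) * ‖F w‖^2 := by
  set wb := w - γ • F w with hwb
  set u := F wb with hu
  have h1 : ⟪u, wb - zstar⟫_ℝ ≥ ρ * ‖u‖^2 := by
    have := hρ wb zstar
    simpa [hzs, hu] using this
  have h2 : ‖u - F w‖ ≤ L * (γ * ‖F w‖) := by
    have := hF wb w
    have hw : wb - w = -(γ • F w) := by rw [hwb]; abel
    rw [hw] at this
    simpa [norm_smul, abs_of_pos hγ0, mul_assoc] using this
  have h2' : ‖u - F w‖^2 ≤ (L*γ)^2 * ‖F w‖^2 := by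
    have hn : (0:ℝ) ≤ ‖u - F w‖ := norm_nonneg _
    nlinarith [norm_nonneg (F w)]
  have h3 : ‖(w - zstar) - (α*γ) • u‖^2
      = ‖w - zstar‖^2 - 2 * ((α*γ) * ⟪w - zstar, u⟫_ℝ) + (α*γ)^2 * ‖u‖^2 := by
    rw [norm_sub_sq_real, real_inner_smul_right, norm_smul, Real.norm_eq_abs,
      abs_of_pos (show (0:ℝ) < α*γ by positivity)]
    ring
  have h4 : ⟪w - zstar, u⟫_ℝ = ⟪u, wb - zstar⟫_ℝ + γ * ⟪u, F w⟫_ℝ := by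
    have : w - zstar = (wb - zstar) + γ • F w := by rw [hwb]; abel
    rw [real_inner_comm, this, inner_add_right, real_inner_smul_right]
  have h5 : 2 * ⟪u, F w⟫_ℝ = ‖u‖^2 + ‖F w‖^2 - ‖u - F w‖^2 := by
    have := norm_sub_sq_real u (F w); linarith
  have hgoal : (w - (α*γ) • F (w - γ • F w)) - zstar = (w - zstar) - (α*γ) • u := by
    rw [hu, hwb]; abel
  rw [hgoal, h3, h4]
  have hαγ : (0:ℝ) < α * γ := mul_pos hα0 hγ0
  have e1 : 2*(α*γ) * (ρ * ‖u‖^2) ≤ 2*(α*γ) * ⟪u, wb - zstar⟫_ℝ :=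
    mul_le_mul_of_nonneg_left h1 (by positivity)
  have e2 : α*γ^2 * (2*⟪u, F w⟫_ℝ) = α*γ^2*(‖u‖^2 + ‖F w‖^2 - ‖u - F w‖^2) := by
    rw [h5]
  have e3 : α*γ^2*‖u - F w‖^2 ≤ α*γ^2*((L*γ)^2*‖F w‖^2) :=
    mul_le_mul_of_nonneg_left h2' (by positivity)
  have e4 : 0 ≤ (α*γ)*((2*ρ+γ) - α*γ)*‖u‖^2 :=
    mul_nonneg (mul_nonneg hαγ.le (sub_nonneg.2 hstep)) (sq_nonneg _)
  nlinarith [e1, e2, e3, e4]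

theorem convex_norm_sq_aux17 {E : Type*} [NormedAddCommGroup E] [InnerProductSpace ℝ E]
    (lam : ℝ) (h0 : 0 ≤ lam) (h1 : lam ≤ 1) (x y : E) :
    ‖(1-lam) • x + lam • y‖^2 ≤ (1-lam)*‖x‖^2 + lam*‖y‖^2 := by
  have hxy := norm_sub_sq_real x y
  have hnn := sq_nonneg ‖x - y‖
  rw [norm_add_sq_real, real_inner_smul_left, real_inner_smul_right, norm_smul, norm_smul,
    Real.norm_eq_abs, Real.norm_eq_abs, abs_of_nonneg h0,
    abs_of_nonneg (by linarith : (0:ℝ) ≤ 1 - lam)]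
  have e : (1-lam)*lam*‖x-y‖^2 = (1-lam)*lam*(‖x‖^2 - 2*⟪x,y⟫_ℝ + ‖y‖^2) := by
    rw [hxy]
  nlinarith [e, mul_nonneg (mul_nonneg (by linarith : (0:ℝ) ≤ 1-lam) h0) hnn]

set_option maxHeartbeats 1000000 in
/-- convergence of Lookahead-CEG+ in the unconstrained case: with
`F` `L`-Lipschitz and `ρ`-comonotone possessing a zero,
`max{0, −2ρ} < γ < 1/L`, `α ∈ (0, 1 + 2ρ/γ)`, `λ ∈ (0,1)`, `τ ≥ 1`, and the
EG+ operator `T(w) = w − αγ F(w − γ F w)`, the iterates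
`z^{k+1} = (1 − λ)z^k + λ T^τ(z^k)` converge to some zero of `F`. -/
theorem stmt17 {E : Type*} [NormedAddCommGroup E] [InnerProductSpace ℝ E]
    [FiniteDimensional ℝ E]
    (F : E → E) (L ρ : ℝ) (hL : 0 < L)
    (hF : ∀ z z' : E, ‖F z - F z'‖ ≤ L * ‖z - z'‖)
    (hρ : ∀ z z' : E, ⟪F z - F z', z - z'⟫_ℝ ≥ ρ * ‖F z - F z'‖^2)
    (hzero : ∃ w, F w = 0)
    (γ α lam : ℝ)
    (hγ : max 0 (-(2 * ρ)) < γ) (hγL : γ < 1 / L)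
    (hα0 : 0 < α) (hαρ : α < 1 + 2 * ρ / γ)
    (hlam0 : 0 < lam) (hlam1 : lam < 1)
    (τ : ℕ) (hτ : 1 ≤ τ)
    (T : E → E) (hT : ∀ w, T w = w - (α * γ) • F (w - γ • F w))
    (z : ℕ → E)
    (hz : ∀ k, z (k + 1) = (1 - lam) • z k + lam • (T^[τ] (z k))) :
    ∃ zstar : E, F zstar = 0 ∧ Tendsto z atTop (nhds zstar) := by
  obtain ⟨z0, hz0⟩ := hzero
  have hγ0 : 0 < γ := lt_of_le_of_lt (le_max_left 0 _) hγ
  have hLγ : L * γ < 1 := by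
    have := (lt_div_iff₀ hL).1 hγL
    linarith
  have hLγ0 : 0 < L * γ := mul_pos hL hγ0
  have hstep : α * γ ≤ 2*ρ + γ := by
    have h := mul_lt_mul_of_pos_right hαρ hγ0
    have he : (1 + 2 * ρ / γ) * γ = γ + 2*ρ := by field_simp
    rw [he] at h; linarith
  set c := α * γ^2 * (1 - (L*γ)^2) with hc
  have hcpos : 0 < c := by
    have : 0 < 1 - (L*γ)^2 := by nlinarith
    positivity
  -- one EG+ step decreases the squared distance to any zero
  have key : ∀ zs : E, F zs = 0 → ∀ w : E,
      ‖T w - zs‖^2 ≤ ‖w - zs‖^2 - c * ‖F w‖^2 := by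
    intro zs hzs w
    rw [hT]
    exact key_step_aux17 F L ρ γ α hF hρ hγ0 hα0 hstep zs hzs w
  have keyle : ∀ zs : E, F zs = 0 → ∀ w : E, ‖T w - zs‖ ≤ ‖w - zs‖ := by
    intro zs hzs w
    have h := key zs hzs w
    have h1 := mul_nonneg hcpos.le (sq_nonneg ‖F w‖)
    nlinarith [norm_nonneg (T w - zs), norm_nonneg (w - zs)]
  have iter_le : ∀ zs : E, F zs = 0 → ∀ n : ℕ, ∀ w : E, ‖T^[n] w - zs‖ ≤ ‖w - zs‖ := by
    intro zs hzs n
    induction n with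
    | zero => intro w; simp
    | succ m ih =>
        intro w
        rw [Function.iterate_succ_apply']
        exact le_trans (keyle zs hzs _) (ih w)
  have iterkey : ∀ zs : E, F zs = 0 → ∀ w : E,
      ‖T^[τ] w - zs‖^2 ≤ ‖w - zs‖^2 - c * ‖F w‖^2 := by
    intro zs hzs w
    obtain ⟨m, rfl⟩ : ∃ m, τ = m + 1 := ⟨τ - 1, by omega⟩
    rw [Function.iterate_add_apply]
    have h1 : ‖T^[m] (T^[1] w) - zs‖ ≤ ‖T^[1] w - zs‖ := iter_le zs hzs m _
    have h2 : ‖T^[1] w - zs‖^2 ≤ ‖w - zs‖^2 - c * ‖F w‖^2 := by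
      simpa using key zs hzs w
    nlinarith [norm_nonneg (T^[m] (T^[1] w) - zs), norm_nonneg (T^[1] w - zs)]
  -- the lookahead step decreases the squared distance to any zero
  have main : ∀ zs : E, F zs = 0 → ∀ k : ℕ,
      ‖z (k+1) - zs‖^2 ≤ ‖z k - zs‖^2 - (lam * c) * ‖F (z k)‖^2 := by
    intro zs hzs k
    have hrw : z (k+1) - zs = (1-lam) • (z k - zs) + lam • (T^[τ] (z k) - zs) := by
      rw [hz k, smul_sub, smul_sub]
      have hs : (1-lam) • zs + lam • zs = zs := by
        rw [← add_smul]; simp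
      rw [show (1-lam) • z k - (1-lam) • zs + (lam • T^[τ] (z k) - lam • zs)
          = (1-lam) • z k + lam • T^[τ] (z k) - ((1-lam) • zs + lam • zs) by abel, hs]
    rw [hrw]
    have hcv := convex_norm_sq_aux17 lam hlam0.le hlam1.le (z k - zs) (T^[τ] (z k) - zs)
    have hik := iterkey zs hzs (z k)
    nlinarith [mul_le_mul_of_nonneg_left hik hlam0.le]
  have hlc : 0 < lam * c := mul_pos hlam0 hcpos
  -- distances to z0 are nonincreasing
  have hanti0 : ∀ k, ‖z (k+1) - z0‖ ≤ ‖z k - z0‖ := by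
    intro k
    have h := main z0 hz0 k
    have h1 := mul_nonneg hlc.le (sq_nonneg ‖F (z k)‖)
    nlinarith [norm_nonneg (z (k+1) - z0), norm_nonneg (z k - z0)]
  have hub : ∀ k, ‖z k - z0‖ ≤ ‖z 0 - z0‖ := by
    intro k
    induction k with
    | zero => exact le_refl _
    | succ m ih => exact le_trans (hanti0 m) ih
  -- summability of the residuals
  have htel : ∀ n, ∑ i ∈ Finset.range n, (lam*c) * ‖F (z i)‖^2
      ≤ ‖z 0 - z0‖^2 - ‖z n - z0‖^2 := by
    intro n
    induction n with
    | zero => simp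
    | succ m ih =>
        rw [Finset.sum_range_succ]
        have := main z0 hz0 m
        linarith
  have hsum : Summable (fun k => (lam*c) * ‖F (z k)‖^2) := by
    apply summable_of_sum_range_le (c := ‖z 0 - z0‖^2)
    · intro n; positivity
    · intro n
      have := htel n
      nlinarith [sq_nonneg ‖z n - z0‖]
  have hFz2 : Tendsto (fun k => ‖F (z k)‖^2) atTop (nhds 0) := by
    have h := hsum.tendsto_atTop_zero
    have h2 := h.const_mul (lam*c)⁻¹
    simp only [mul_zero] at h2
    refine h2.congr fun k => ?_
    field_simp
  have hFz : Tendsto (fun k => F (z k)) atTop (nhds 0) := by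
    rw [tendsto_zero_iff_norm_tendsto_zero]
    have hs : Tendsto (fun k => Real.sqrt (‖F (z k)‖^2)) atTop (nhds 0) := by
      have h := (Real.continuous_sqrt.tendsto 0).comp hFz2
      simp only [Function.comp_def, Real.sqrt_zero] at h
      exact h
    refine hs.congr fun k => ?_
    exact Real.sqrt_sq (norm_nonneg _)
  -- extract a convergent subsequence
  have hball : ∀ k, z k ∈ Metric.closedBall z0 (‖z 0 - z0‖) := by
    intro k
    rw [Metric.mem_closedBall, dist_eq_norm]
    exact hub k
  obtain ⟨zbar, _, φ, hφ, hconv⟩ :=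
    (isCompact_closedBall z0 (‖z 0 - z0‖)).tendsto_subseq hball
  -- F zbar = 0
  have hsub0 : Tendsto (fun j => F (z (φ j))) atTop (nhds 0) :=
    hFz.comp hφ.tendsto_atTop
  have hnormconv : Tendsto (fun j => ‖z (φ j) - zbar‖) atTop (nhds 0) := by
    have := tendsto_iff_norm_sub_tendsto_zero.1 hconv
    exact this
  have hsubF : Tendsto (fun j => F (z (φ j))) atTop (nhds (F zbar)) := by
    rw [tendsto_iff_norm_sub_tendsto_zero]
    apply squeeze_zero (fun j => norm_nonneg _) (fun j => hF _ _)
    have h := hnormconv.const_mul L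
    rw [mul_zero] at h
    exact h
  have hFzbar : F zbar = 0 := tendsto_nhds_unique hsubF hsub0
  refine ⟨zbar, hFzbar, ?_⟩
  -- Fejér monotonicity w.r.t. zbar
  have hanti : Antitone (fun k => ‖z k - zbar‖) := by
    apply antitone_nat_of_succ_le
    intro k
    have hm := main zbar hFzbar k
    have h1 := mul_nonneg hlc.le (sq_nonneg ‖F (z k)‖)
    have h2 := norm_nonneg (z (k+1) - zbar)
    have h3 := norm_nonneg (z k - zbar)
    show ‖z (k+1) - zbar‖ ≤ ‖z k - zbar‖
    nlinarith
  have hbdd : BddBelow (Set.range (fun k => ‖z k - zbar‖)) :=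
    ⟨0, by rintro _ ⟨k, rfl⟩; exact norm_nonneg _⟩
  have hlim := tendsto_atTop_ciInf hanti hbdd
  have hsub : Tendsto ((fun k => ‖z k - zbar‖) ∘ φ) atTop
      (nhds (⨅ i, ‖z i - zbar‖)) := hlim.comp hφ.tendsto_atTop
  have hsubz : Tendsto ((fun k => ‖z k - zbar‖) ∘ φ) atTop (nhds 0) := hnormconv
  have hinf : (⨅ i, ‖z i - zbar‖) = 0 := tendsto_nhds_unique hsub hsubz
  rw [hinf] at hlim
  exact tendsto_iff_norm_sub_tendsto_zero.2 hlim
end
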